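/- arXiv:1508.03798 — 16 statements merged into one kernel-verified Lean document; each statement's English description precedes it below -/
import Mathlib

section
/- Let R be a commutative ring. A multiplicative subset S of R (not containing 0) is a maximal element (with respect to inclusion) of the set of multiplicative subsets T with 0 ∉ T if and only if S = R \ p for some minimal prime ideal p of R. -/
/-!
Every submonoid avoiding `0` lies in the complement of some minimal prime: enlarge `⊥` to a prime
disjoint from it, then shrink that prime to a minimal one. Since complements of minimal primes are
pairwise incomparable, they are exactly the maximal such submonoids.
-/

namespace Ideal

variable {R : Type*} [CommRing R]

theorem exists_mem_minimalPrimes_subset_compl {S : Submonoid R} (h0 : (0 : R) ∉ S) :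
    ∃ p ∈ minimalPrimes R, (S : Set R) ⊆ (p : Set R)ᶜ := by
  obtain ⟨q, hq, -, hdisj⟩ := exists_le_prime_disjoint (⊥ : Ideal R) S (by simpa using h0)
  obtain ⟨p, hp, hpq⟩ := exists_minimalPrimes_le (I := ⊥) (J := q) bot_le
  exact ⟨p, hp, fun x hxS hxp => Set.disjoint_right.mp hdisj hxS (hpq hxp)⟩

theorem eq_of_mem_minimalPrimes_of_compl_subset {p q : Ideal R} (hp : p ∈ minimalPrimes R)
    (hq : q ∈ minimalPrimes R) (h : (p : Set R)ᶜ ⊆ (q : Set R)ᶜ) : q = p := by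
  have hqp : q ≤ p := Set.compl_subset_compl.mp h
  exact le_antisymm hqp (hp.2 hq.1 hqp)

end Ideal

open Ideal in
/-- Let `R` be a commutative ring. A multiplicative subset `S` of `R`
(not containing `0`) is a maximal element (with respect to inclusion) of the set of
multiplicative subsets `T` with `0 ∉ T` if and only if `S = R \ p` for some minimal
prime ideal `p` of `R`. -/
theorem stmt0 {R : Type*} [CommRing R] (S : Submonoid R) (h0 : (0 : R) ∉ S) :
    (∀ T : Submonoid R, (0 : R) ∉ T → S ≤ T → T = S) ↔
      ∃ p : Ideal R, p ∈ minimalPrimes R ∧ (S : Set R) = (p : Set R)ᶜ := by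
  constructor
  · intro hmax
    obtain ⟨p, hp, hSp⟩ := exists_mem_minimalPrimes_subset_compl h0
    have := hp.1.1
    have hpS : p.primeCompl = S := hmax _ (fun h => h p.zero_mem) hSp
    exact ⟨p, hp, by rw [← hpS]; rfl⟩
  · rintro ⟨p, hp, hS⟩ T hT0 hST
    obtain ⟨q, hq, hTq⟩ := exists_mem_minimalPrimes_subset_compl hT0
    have hSq : (S : Set R) ⊆ (q : Set R)ᶜ := (SetLike.coe_subset_coe.mpr hST).trans hTq
    have hqp : q = p := eq_of_mem_minimalPrimes_of_compl_subset hp hq (hS ▸ hSq)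
    refine le_antisymm (fun x hxT => ?_) hST
    rw [← SetLike.mem_coe, hS, ← hqp]
    exact hTq hxT
end

section
/- Let Q be a ring in which every chain of left annihilator ideals stabilizes (ACC on left annihilators). If x, y ∈ Q satisfy y·x = 1, then x·y = 1, i.e., x and y are units. -/
/-! The left annihilators `{q | q * x ^ n = 0}` form an ascending chain, so they stabilise at some
`n`. If `y * x = 1`, then `(1 - x * y) * y ^ n` kills `x ^ (n + 1)`, because
`y ^ n * x ^ (n + 1) = x`; hence it also kills `x ^ n`, and since `y ^ n * x ^ n = 1` this says
`1 - x * y = 0`. -/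

theorem monotone_setOf_mul_pow_eq_zero {M : Type*} [MonoidWithZero M] (x : M) :
    Monotone fun n : ℕ => {q : M | q * x ^ n = 0} := by
  intro m n hmn q hq
  obtain ⟨k, rfl⟩ := Nat.exists_eq_add_of_le hmn
  have hq : q * x ^ m = 0 := hq
  show q * x ^ (m + k) = 0
  rw [pow_add, ← mul_assoc, hq, zero_mul]

theorem mul_eq_one_of_leftAnnihilator_pow_stable {R : Type*} [Ring R] {x y : R} (h : y * x = 1)
    {n : ℕ} (hn : ∀ q : R, q * x ^ (n + 1) = 0 → q * x ^ n = 0) : x * y = 1 := by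
  have hpow : y ^ n * x ^ n = 1 := pow_mul_pow_eq_one n h
  have hkill : (1 - x * y) * y ^ n * x ^ (n + 1) = 0 := by
    rw [pow_succ, ← mul_assoc, mul_assoc _ (y ^ n), hpow, mul_one, sub_mul, one_mul, mul_assoc, h,
      mul_one, sub_self]
  have := hn _ hkill
  rwa [mul_assoc, hpow, mul_one, sub_eq_zero, eq_comm] at this

/-- Let `Q` be a ring in which every ascending chain of left
annihilator ideals stabilizes (ACC on left annihilators). If `x, y ∈ Q` satisfy
`y * x = 1`, then `x * y = 1`. -/
theorem stmt2 {Q : Type*} [Ring Q]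
    (hacc : ∀ f : ℕ → Set Q,
      (∀ n : ℕ, ∃ X : Set Q, f n = {q : Q | ∀ a ∈ X, q * a = 0}) →
      Monotone f → ∃ n : ℕ, ∀ m : ℕ, n ≤ m → f m = f n)
    (x y : Q) (h : y * x = 1) : x * y = 1 := by
  obtain ⟨n, hn⟩ := hacc (fun n => {q | q * x ^ n = 0}) (fun n => ⟨{x ^ n}, by simp⟩)
    (monotone_setOf_mul_pow_eq_zero x)
  exact mul_eq_one_of_leftAnnihilator_pow_stable h fun q hq =>
    (Set.ext_iff.mp (hn (n + 1) n.le_succ) q).mp hq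
end

section
/- Let Q be a ring containing no infinite direct sum of nonzero left ideals. If x, y ∈ Q satisfy y·x = 1, then x·y = 1. -/
/-!
If `y * x = 1` but `x * y ≠ 1`, then `p = 1 - x * y` is a nonzero idempotent with `p * x = 0`
and `y * p = 0`. Conjugating it by the powers of `x` and `y` gives the idempotents
`eₙ = xⁿ * p * yⁿ`; since `yⁱ * xʲ` is a power of `x` or of `y` whenever `i ≠ j`, they are pairwise
orthogonal, and `yⁿ * eₙ * xⁿ = p` shows they are nonzero. Orthogonal nonzero idempotents
generate an infinite direct sum of nonzero left ideals `R eₙ`.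
-/

theorem OrthogonalIdempotents.iSupIndep_span_singleton {R I : Type*} [Semiring R] {e : I → R}
    (he : OrthogonalIdempotents e) : iSupIndep fun i => Ideal.span {e i} := by
  intro i
  rw [disjoint_iff_inf_le]
  rintro a ⟨hai, hrest⟩
  -- right multiplication by `e i` fixes `R * e i` and kills every other summand
  have hkill : (⨆ j, ⨆ (_ : j ≠ i), Ideal.span {e j}) ≤
      LinearMap.ker (LinearMap.toSpanSingleton R R (e i)) :=
    iSup₂_le fun j hj => (Ideal.span_singleton_le_iff_mem _).2 (he.ortho hj)
  obtain ⟨q, rfl⟩ := Ideal.mem_span_singleton'.1 hai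
  have hfix : q * e i * e i = q * e i := by rw [mul_assoc, (he.idem i).eq]
  simpa [hfix] using hkill hrest

section LeftInverse

variable {M : Type*} [Monoid M] {x y : M}

theorem pow_mul_pow_of_mul_eq_one_of_le (h : y * x = 1) {i j : ℕ} (hij : i ≤ j) :
    y ^ i * x ^ j = x ^ (j - i) := by
  rw [← pow_mul_pow_sub x hij, ← mul_assoc, pow_mul_pow_eq_one i h, one_mul]

theorem pow_mul_pow_of_mul_eq_one_of_ge (h : y * x = 1) {i j : ℕ} (hji : j ≤ i) :
    y ^ i * x ^ j = y ^ (i - j) := by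
  rw [← pow_sub_mul_pow y hji, mul_assoc, pow_mul_pow_eq_one j h, mul_one]

end LeftInverse

section ConjugateIdempotents

variable {R : Type*} [Semiring R] {x y p : R}

theorem orthogonalIdempotents_pow_mul_mul_pow (h : y * x = 1) (hp : IsIdempotentElem p)
    (hpx : p * x = 0) (hyp : y * p = 0) :
    OrthogonalIdempotents fun n : ℕ => x ^ n * p * y ^ n := by
  have hmul (i j : ℕ) : x ^ i * p * y ^ i * (x ^ j * p * y ^ j) =
      x ^ i * (p * (y ^ i * x ^ j) * p) * y ^ j := by simp only [mul_assoc]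
  refine ⟨fun n => ?_, fun i j hij => ?_⟩
  · rw [IsIdempotentElem, hmul, pow_mul_pow_eq_one n h, mul_one, hp.eq]
  · have hmid : p * (y ^ i * x ^ j) * p = 0 := by
      rcases Nat.lt_or_gt_of_ne hij with hlt | hgt
      · obtain ⟨k, hk⟩ : ∃ k, j - i = k + 1 := Nat.exists_eq_add_one.2 (Nat.sub_pos_of_lt hlt)
        rw [pow_mul_pow_of_mul_eq_one_of_le h hlt.le, hk, pow_succ', ← mul_assoc, hpx,
          zero_mul, zero_mul]
      · obtain ⟨k, hk⟩ : ∃ k, i - j = k + 1 := Nat.exists_eq_add_one.2 (Nat.sub_pos_of_lt hgt)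
        rw [pow_mul_pow_of_mul_eq_one_of_ge h hgt.le, hk, pow_succ, mul_assoc, mul_assoc, hyp,
          mul_zero, mul_zero]
    simp only [hmul, hmid, mul_zero, zero_mul]

theorem pow_mul_mul_pow_ne_zero (h : y * x = 1) (hp : p ≠ 0) (n : ℕ) :
    x ^ n * p * y ^ n ≠ 0 := by
  intro hn
  apply hp
  calc p = y ^ n * (x ^ n * p * y ^ n) * x ^ n := by
        simp only [← mul_assoc, pow_mul_pow_eq_one n h, one_mul]
        rw [mul_assoc, pow_mul_pow_eq_one n h, mul_one]
    _ = 0 := by rw [hn, mul_zero, zero_mul]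

end ConjugateIdempotents

section OneSubMul

variable {R : Type*} [Ring R] {x y : R}

theorem one_sub_mul_mul_eq_zero (h : y * x = 1) : (1 - x * y) * x = 0 := by
  rw [sub_mul, one_mul, mul_assoc, h, mul_one, sub_self]

theorem mul_one_sub_mul_eq_zero (h : y * x = 1) : y * (1 - x * y) = 0 := by
  rw [mul_sub, mul_one, ← mul_assoc, h, one_mul, sub_self]

theorem isIdempotentElem_one_sub_mul (h : y * x = 1) : IsIdempotentElem (1 - x * y) := by
  rw [IsIdempotentElem, mul_sub, mul_one, ← mul_assoc, one_sub_mul_mul_eq_zero h, zero_mul,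
    sub_zero]

end OneSubMul

/-- Let `Q` be a ring containing no infinite direct sum of nonzero
left ideals. If `x, y ∈ Q` satisfy `y * x = 1`, then `x * y = 1`. -/
theorem stmt3 {Q : Type*} [Ring Q]
    (h : ¬ ∃ f : ℕ → Ideal Q, (∀ n, f n ≠ ⊥) ∧ iSupIndep f)
    (x y : Q) (hyx : y * x = 1) : x * y = 1 := by
  by_contra hxy
  set e : ℕ → Q := fun n => x ^ n * (1 - x * y) * y ^ n
  have he : OrthogonalIdempotents e := orthogonalIdempotents_pow_mul_mul_pow hyx
    (isIdempotentElem_one_sub_mul hyx) (one_sub_mul_mul_eq_zero hyx) (mul_one_sub_mul_eq_zero hyx)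
  have hne (n : ℕ) : e n ≠ 0 := pow_mul_mul_pow_ne_zero hyx (sub_ne_zero.2 (Ne.symm hxy)) n
  exact h ⟨fun n => Ideal.span {e n}, fun n => by simpa using hne n, he.iSupIndep_span_singleton⟩
end

section
/- Let R be a ring, S a left denominator set of R consisting of regular elements such that S = R ∩ Q'^*, where Q' = S^{-1}R and Q'^* is the group of units of Q'. Assume Q' is left Noetherian. If y·z ∈ S for some y, z ∈ R, then y ∈ S and z ∈ S. -/
/-- By Orzech's theorem the surjective endomorphism `c ↦ c * b` of the left module `Q` is
injective, and it sends both `b * a` and `1` to `b`. -/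
instance IsNoetherianRing.isDedekindFiniteMonoid (Q : Type*) [Ring Q] [IsNoetherianRing Q] :
    IsDedekindFiniteMonoid Q where
  mul_eq_one_symm {a b} hab := by
    have hsurj : Function.Surjective (LinearMap.toSpanSingleton Q Q b) := fun c =>
      ⟨c * a, by simp [mul_assoc, hab]⟩
    refine IsNoetherian.injective_of_surjective_endomorphism _ hsurj ?_
    simp [mul_assoc, hab]

theorem stmt5_general {R Q' : Type*} [Ring R] [Ring Q'] (S : Submonoid R)
    (φ : R →+* Q')
    (hmem : ∀ r : R, r ∈ S ↔ IsUnit (φ r))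
    [IsNoetherianRing Q']
    (y z : R) (hyz : y * z ∈ S) : y ∈ S ∧ z ∈ S := by
  obtain ⟨hy, hz⟩ := IsUnit.mul_iff.mp (map_mul φ y z ▸ (hmem _).mp hyz)
  exact ⟨(hmem y).mpr hy, (hmem z).mpr hz⟩

/-- Let `R` be a ring, `S` a left denominator set of `R` consisting of
regular elements such that `S = R ∩ Q'^*`, where `Q' = S⁻¹R` (modelled by a ring `Q'`
together with a ring homomorphism `φ : R → Q'` which is injective, sends elements of `S`
to units, and such that every element of `Q'` is a left fraction `(φ s)⁻¹ (φ r)`).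
Assume `Q'` is left Noetherian. If `y * z ∈ S` for some `y, z ∈ R`, then `y ∈ S` and
`z ∈ S`. -/
theorem stmt5 {R Q' : Type*} [Ring R] [Ring Q'] (S : Submonoid R)
    (hreg : ∀ s ∈ S, IsRegular s)
    (hOre : ∀ (r : R), ∀ s ∈ S, ∃ s' ∈ S, ∃ r' : R, s' * r = r' * s)
    (hden : ∀ (r : R), ∀ s ∈ S, r * s = 0 → ∃ t ∈ S, t * r = 0)
    (φ : R →+* Q') (hinj : Function.Injective φ)
    (hunit : ∀ s ∈ S, IsUnit (φ s))
    (hfrac : ∀ q : Q', ∃ s ∈ S, ∃ r : R, φ s * q = φ r)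
    (hmem : ∀ r : R, r ∈ S ↔ IsUnit (φ r))
    [IsNoetherianRing Q']
    (y z : R) (hyz : y * z ∈ S) : y ∈ S ∧ z ∈ S :=
  stmt5_general S φ hmem y z hyz
end

section
/- Let R be a commutative ring and I a nil ideal of R. Then the map S ↦ π(S) gives a bijection between multiplicative subsets S of R with 0 ∉ S and S + I ⊆ S, and multiplicative subsets T of R/I with 0 ∉ T; the inverse is T ↦ π^{-1}(T), where π : R → R/I is the quotient map. -/
/-! A submonoid `S` avoiding `0` cannot meet a nil ideal `I`: an element `s ∈ S ∩ I` would put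
`0 = sⁿ` in `S`. Hence `π(S)` avoids `0`. Closure of `S` under adding `I` says that `S` is
a union of cosets of `I`, i.e. `S = π⁻¹(π(S))`. Conversely, preimages under `π` are always unions
of cosets, and `π(π⁻¹(T)) = T` because `π` is surjective. -/

namespace Submonoid

variable {R R' : Type*}

theorem zero_notMem_map_of_isNilpotent_ker [Semiring R] [Semiring R'] (f : R →+* R')
    (hf : ∀ a ∈ RingHom.ker f, IsNilpotent a) {S : Submonoid R} (hS : (0 : R) ∉ S) : (0 : R') ∉ S.map f := by
  rintro ⟨s, hs, hfs⟩
  obtain ⟨n, hn⟩ := hf s hfs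
  exact hS (hn ▸ pow_mem hs n)

theorem comap_map_eq_of_add_ker_mem [Ring R] [Ring R'] (f : R →+* R') {S : Submonoid R}
    (hS : ∀ s ∈ S, ∀ a ∈ RingHom.ker f, s + a ∈ S) : (S.map f).comap f = S := by
  refine le_antisymm ?_ (le_comap_map S)
  rintro x ⟨s, hs, hsx⟩
  have hxs : x - s ∈ RingHom.ker f := by simp [RingHom.mem_ker, hsx]
  simpa using hS s hs _ hxs

theorem add_ker_mem_comap [Semiring R] [Semiring R'] (f : R →+* R') (T : Submonoid R') :
    ∀ s ∈ T.comap f, ∀ a ∈ RingHom.ker f, s + a ∈ T.comap f := by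
  intro s hs a ha
  rw [RingHom.mem_ker] at ha
  simpa [mem_comap, ha] using hs

end Submonoid

/-- Let `R` be a commutative ring and `I` a nil ideal of `R`. Then the
map `S ↦ π(S)` gives a bijection between multiplicative subsets `S` of `R` with `0 ∉ S`
and `S + I ⊆ S`, and multiplicative subsets `T` of `R/I` with `0 ∉ T`; the inverse is
`T ↦ π⁻¹(T)`, where `π : R → R/I` is the quotient map. -/
theorem stmt6 {R : Type*} [CommRing R] (I : Ideal R) (hI : ∀ a ∈ I, IsNilpotent a) :
    (∀ S : Submonoid R, (0 : R) ∉ S → (∀ s ∈ S, ∀ a ∈ I, s + a ∈ S) →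
      ((0 : R ⧸ I) ∉ S.map (Ideal.Quotient.mk I).toMonoidHom ∧
        (S.map (Ideal.Quotient.mk I).toMonoidHom).comap
          (Ideal.Quotient.mk I).toMonoidHom = S)) ∧
    (∀ T : Submonoid (R ⧸ I), (0 : R ⧸ I) ∉ T →
      ((0 : R) ∉ T.comap (Ideal.Quotient.mk I).toMonoidHom ∧
        (∀ s ∈ T.comap (Ideal.Quotient.mk I).toMonoidHom, ∀ a ∈ I,
          s + a ∈ T.comap (Ideal.Quotient.mk I).toMonoidHom) ∧
        (T.comap (Ideal.Quotient.mk I).toMonoidHom).map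
          (Ideal.Quotient.mk I).toMonoidHom = T)) := by
  refine ⟨fun S hS0 hSI => ⟨?_, ?_⟩, fun T hT0 => ⟨?_, ?_, ?_⟩⟩
  · exact Submonoid.zero_notMem_map_of_isNilpotent_ker _ (by rwa [Ideal.mk_ker]) hS0
  · exact Submonoid.comap_map_eq_of_add_ker_mem _ (by rwa [Ideal.mk_ker])
  · simpa using hT0
  · exact fun s hs a ha => Submonoid.add_ker_mem_comap _ T s hs a (by rwa [Ideal.mk_ker])
  · exact Submonoid.map_comap_eq_of_surjective Ideal.Quotient.mk_surjective T
end

section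
/- Let R be a commutative ring and I a nil ideal. If S is a multiplicative subset of R maximal among multiplicative subsets avoiding 0, then S + I ⊆ S, and π(S) is maximal among multiplicative subsets of R/I avoiding 0. -/
/-!
Let `π : R → R/I`. For a submonoid `T ⊆ R/I` avoiding `0` and containing `π(S)`, the preimage
`π⁻¹(T)` avoids `0` and contains `S`, so it equals `S` by maximality. Taking `T = π(S)`, which
avoids `0` because `π(s) = 0` would make `s ∈ S` nilpotent, gives `S + I ⊆ π⁻¹(π(S)) = S`; for
general `T`, surjectivity of `π` gives `T = π(π⁻¹(T)) = π(S)`.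
-/

namespace Submonoid

variable {M N F : Type*} [MonoidWithZero M] [MonoidWithZero N] [FunLike F M N]
  [MonoidWithZeroHomClass F M N]

theorem zero_mem_of_isNilpotent {S : Submonoid M} {x : M} (hx : x ∈ S) (hnil : IsNilpotent x) :
    (0 : M) ∈ S := by
  obtain ⟨k, hk⟩ := hnil
  exact hk ▸ S.pow_mem hx k

theorem zero_notMem_map_of_isNilpotent {f : F} (hf : ∀ a, f a = 0 → IsNilpotent a)
    {S : Submonoid M} (h0 : (0 : M) ∉ S) : (0 : N) ∉ S.map f := by
  rintro ⟨s, hs, hfs⟩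
  exact h0 (zero_mem_of_isNilpotent hs (hf s hfs))

theorem comap_eq_of_map_le_of_maximal {f : F} {S : Submonoid M}
    (hmax : ∀ T : Submonoid M, (0 : M) ∉ T → S ≤ T → T = S) {T : Submonoid N}
    (hT0 : (0 : N) ∉ T) (hST : S.map f ≤ T) : T.comap f = S :=
  hmax _ (by simpa only [mem_comap, map_zero]) (map_le_iff_le_comap.1 hST)

end Submonoid

open Submonoid in
/-- Let `R` be a commutative ring and `I` a nil ideal. If `S` is a
multiplicative subset of `R` maximal among multiplicative subsets avoiding `0`, then
`S + I ⊆ S`, and `π(S)` is maximal among multiplicative subsets of `R/I` avoiding `0`. -/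
theorem stmt7 {R : Type*} [CommRing R] (I : Ideal R) (hI : ∀ a ∈ I, IsNilpotent a)
    (S : Submonoid R) (h0 : (0 : R) ∉ S)
    (hmax : ∀ T : Submonoid R, (0 : R) ∉ T → S ≤ T → T = S) :
    (∀ s ∈ S, ∀ a ∈ I, s + a ∈ S) ∧
      ((0 : R ⧸ I) ∉ S.map (Ideal.Quotient.mk I).toMonoidHom ∧
        ∀ T : Submonoid (R ⧸ I), (0 : R ⧸ I) ∉ T →
          S.map (Ideal.Quotient.mk I).toMonoidHom ≤ T →
          T = S.map (Ideal.Quotient.mk I).toMonoidHom) := by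
  set π := Ideal.Quotient.mk I
  have hπ0 : (0 : R ⧸ I) ∉ S.map π :=
    zero_notMem_map_of_isNilpotent (fun a ha => hI a (Ideal.Quotient.eq_zero_iff_mem.1 ha)) h0
  have hsat : (S.map π).comap π = S := comap_eq_of_map_le_of_maximal hmax hπ0 le_rfl
  refine ⟨fun s hs a ha => ?_, hπ0, fun T hT0 hST => ?_⟩
  · rw [← hsat]
    exact ⟨s, hs, (Ideal.Quotient.eq.2 (by simpa using ha)).symm⟩
  · rw [← map_comap_eq_of_surjective Ideal.Quotient.mk_surjective T,
      comap_eq_of_map_le_of_maximal (f := π) hmax hT0 hST]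
    rfl
end

section
/- Let R be a ring whose set C of regular elements is a left Ore set, and suppose the left quotient ring Q = C^{-1}R is left Noetherian. Then the prime radical n of R satisfies n = R ∩ n_Q, where n_Q is the prime radical of Q; in particular n is a nilpotent ideal of R. -/
/-- A (two-sided) prime ideal of a possibly noncommutative ring: a proper two-sided
ideal `P` such that `a R b ⊆ P` implies `a ∈ P` or `b ∈ P`. -/
def IsPrimeTwoSided {R : Type*} [Ring R] (P : Ideal R) : Prop :=
  (∀ a ∈ P, ∀ r : R, a * r ∈ P) ∧ P ≠ ⊤ ∧
    ∀ a b : R, (∀ r : R, a * r * b ∈ P) → a ∈ P ∨ b ∈ P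

/-- The prime radical (intersection of all two-sided prime ideals) of a ring. -/
def primeRadical (R : Type*) [Ring R] : Ideal R :=
  sInf {P : Ideal R | IsPrimeTwoSided P}

/-- An ideal `n` is nilpotent if, for some `k ≥ 1`, every product of `k` elements of
`n` vanishes. -/
def IdealIsNilpotent {R : Type*} [Ring R] (n : Ideal R) : Prop :=
  ∃ k : ℕ, 0 < k ∧ ∀ l : List R, (∀ x ∈ l, x ∈ n) → l.length = k → l.prod = 0


/-! Every prime `P` of `Q` contracts to a prime of `R`: from `a R b ⊆ P` one gets `a Q b ⊆ P`,
because the extension to `Q` of the two-sided ideal `RaR` is again two-sided (in a left Noetherian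
ring, a left ideal `J` with `J u ⊆ J` for a unit `u` also satisfies `J u⁻¹ ⊆ J`). Hence
`n ⊆ R ∩ n_Q`. Conversely, by Noetherian induction every two-sided ideal of `Q` contains a power
of `n_Q`, so `n_Q` is nilpotent; then so is `R ∩ n_Q`, and a nilpotent ideal lies in every prime. -/

section Radical

variable {A : Type*} [Ring A]

theorem IsPrimeTwoSided.isTwoSided {P : Ideal A} (hP : IsPrimeTwoSided P) : P.IsTwoSided :=
  ⟨fun b ha => hP.1 _ ha b⟩

instance primeRadical.isTwoSided : (primeRadical A).IsTwoSided :=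
  ⟨fun b ha => Submodule.mem_sInf.2 fun P hP => hP.isTwoSided.mul_mem_of_left b
    (Submodule.mem_sInf.1 ha P hP)⟩

theorem IsPrimeTwoSided.le_of_forall_list_prod_mem {I P : Ideal A} (hP : IsPrimeTwoSided P)
    {k : ℕ} (h : ∀ l : List A, (∀ x ∈ l, x ∈ I) → l.length = k → l.prod ∈ P) : I ≤ P := by
  intro b hbI
  by_contra hbP
  -- `(l ++ [r * b]).prod = l.prod * r * b`, so primality strips the factor `b ∉ P` off the end.
  induction k with
  | zero => exact hP.2.1 ((Ideal.eq_top_iff_one P).2 (by simpa using h [] (by simp) rfl))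
  | succ k ih =>
    refine ih fun l hl hlen => (hP.2.2 _ _ fun r => ?_).resolve_right hbP
    have hmem : ∀ x ∈ l ++ [r * b], x ∈ I := by
      simpa [or_imp, forall_and] using ⟨hl, I.mul_mem_left r hbI⟩
    simpa [List.prod_append, mul_assoc] using h _ hmem (by simp [hlen])

theorem IdealIsNilpotent.le_primeRadical {I : Ideal A} (hI : IdealIsNilpotent I) :
    I ≤ primeRadical A := by
  obtain ⟨k, -, hk⟩ := hI
  exact le_sInf fun P hP =>
    hP.le_of_forall_list_prod_mem fun l hl hlen => hk l hl hlen ▸ P.zero_mem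

theorem Ideal.list_prod_mem_pow {I : Ideal A} [I.IsTwoSided] {l : List A}
    (hl : ∀ x ∈ l, x ∈ I) : l.prod ∈ I ^ l.length := by
  induction l with
  | nil => simp [Submodule.pow_zero]
  | cons x l ih =>
    rw [List.prod_cons, List.length_cons, Ideal.IsTwoSided.pow_succ]
    exact Ideal.mul_mem_mul (hl x (by simp)) (ih fun y hy => hl y (by simp [hy]))

theorem idealIsNilpotent_of_pow_eq_bot {I : Ideal A} [I.IsTwoSided] {k : ℕ} (hk : I ^ k = ⊥) :
    IdealIsNilpotent I := by
  refine ⟨k + 1, k.succ_pos, fun l hl hlen => ?_⟩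
  have hle : I ^ (k + 1) ≤ ⊥ := by
    rw [Submodule.pow_succ, hk]
    exact (Ideal.mul_mono_left le_rfl).trans_eq (Submodule.bot_mul I)
  simpa using hle (hlen ▸ Ideal.list_prod_mem_pow hl)

theorem IdealIsNilpotent.comap {B : Type*} [Ring B] {f : A →+* B} (hf : Function.Injective f)
    {I : Ideal B} (hI : IdealIsNilpotent I) : IdealIsNilpotent (I.comap f) := by
  obtain ⟨k, hk, hprod⟩ := hI
  refine ⟨k, hk, fun l hl hlen => hf ?_⟩
  rw [map_zero, map_list_prod]
  exact hprod _ (by simpa using hl) (by simpa using hlen)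

theorem Ideal.isTwoSided_sup (I J : Ideal A) [I.IsTwoSided] [J.IsTwoSided] :
    (I ⊔ J).IsTwoSided := by
  refine ⟨fun b hx => ?_⟩
  obtain ⟨y, hy, z, hz, rfl⟩ := Submodule.mem_sup.1 hx
  rw [add_mul]
  exact Submodule.add_mem_sup (I.mul_mem_right b hy) (J.mul_mem_right b hz)

theorem Ideal.mem_span_singleton_mul_top (x : A) : x ∈ span {x} * ⊤ := by
  simpa using mul_mem_mul (mem_span_singleton_self x) (Submodule.mem_top (x := 1))

theorem Ideal.span_singleton_mul_top_mul_le {I : Ideal A} [I.IsTwoSided] {a b : A}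
    (hab : ∀ r, a * r * b ∈ I) : span {a} * ⊤ * (span {b} * ⊤) ≤ I := by
  have hab' : span {a} * span {b} ≤ I := by
    refine mul_le.2 fun x hx y hy => ?_
    obtain ⟨p, rfl⟩ := mem_span_singleton'.1 hx
    obtain ⟨q, rfl⟩ := mem_span_singleton'.1 hy
    simpa only [mul_assoc] using I.mul_mem_left p (hab q)
  calc span {a} * ⊤ * (span {b} * ⊤) = span {a} * (⊤ * span {b}) * ⊤ := by
        simp only [mul_assoc]
    _ = span {a} * span {b} * ⊤ := by rw [top_mul]
    _ ≤ I * ⊤ := mul_mono_left hab'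
    _ ≤ I := mul_le_left

theorem exists_lt_mul_le_of_not_isPrimeTwoSided {I : Ideal A} [I.IsTwoSided] (hI : I ≠ ⊤)
    (hIp : ¬IsPrimeTwoSided I) :
    ∃ J K : Ideal A, J.IsTwoSided ∧ K.IsTwoSided ∧ I < J ∧ I < K ∧ J * K ≤ I := by
  obtain ⟨a, b, hab, haI, hbI⟩ : ∃ a b, (∀ r, a * r * b ∈ I) ∧ a ∉ I ∧ b ∉ I := by
    by_contra! h
    exact hIp ⟨fun x hx r => I.mul_mem_right r hx, hI,
      fun a b hab => or_iff_not_imp_left.2 (h a b hab)⟩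
  refine ⟨I ⊔ Ideal.span {a} * ⊤, I ⊔ Ideal.span {b} * ⊤, Ideal.isTwoSided_sup _ _,
    Ideal.isTwoSided_sup _ _, ?_, ?_, ?_⟩
  · exact left_lt_sup.2 fun h => haI (h (Ideal.mem_span_singleton_mul_top a))
  · exact left_lt_sup.2 fun h => hbI (h (Ideal.mem_span_singleton_mul_top b))
  · simp only [Ideal.mul_sup, Ideal.sup_mul, sup_le_iff]
    exact ⟨⟨Ideal.mul_le_right, Ideal.mul_le_right⟩, Ideal.mul_le_left,
      Ideal.span_singleton_mul_top_mul_le hab⟩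

theorem exists_pow_primeRadical_le [IsNoetherianRing A] (I : Ideal A) [hI : I.IsTwoSided] :
    ∃ k : ℕ, primeRadical A ^ k ≤ I := by
  revert hI
  induction I using WellFoundedGT.induction with
  | _ I ih =>
    intro hI
    by_cases htop : I = ⊤
    · exact ⟨0, by simp [htop]⟩
    by_cases hprime : IsPrimeTwoSided I
    · exact ⟨1, by rw [Submodule.pow_one]; exact sInf_le hprime⟩
    obtain ⟨J, K, hJ, hK, hIJ, hIK, hJK⟩ := exists_lt_mul_le_of_not_isPrimeTwoSided htop hprime
    obtain ⟨m, hm⟩ := ih J hIJ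
    obtain ⟨n, hn⟩ := ih K hIK
    exact ⟨m + n, by rw [Ideal.IsTwoSided.pow_add]; exact (Ideal.mul_mono hm hn).trans hJK⟩

variable (A) in
theorem idealIsNilpotent_primeRadical [IsNoetherianRing A] :
    IdealIsNilpotent (primeRadical A) := by
  obtain ⟨k, hk⟩ := exists_pow_primeRadical_le (⊥ : Ideal A)
  exact idealIsNilpotent_of_pow_eq_bot (le_bot_iff.1 hk)

/- Right multiplication by `u` induces a surjective endomorphism of the Noetherian module
`A ⧸ J`, which is therefore injective. -/
theorem Ideal.mul_inv_mem_of_mul_mem [IsNoetherianRing A] {J : Ideal A}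
    (u : Aˣ) (hJ : ∀ w ∈ J, w * u ∈ J) {w : A} (hw : w ∈ J) : w * ↑u⁻¹ ∈ J := by
  let f : A ⧸ J →ₗ[A] A ⧸ J :=
    J.mapQ J (LinearMap.toSpanSingleton A A u) fun w hw => by simpa using hJ w hw
  have hf : Function.Surjective f := by
    intro z
    obtain ⟨z, rfl⟩ := J.mkQ_surjective z
    exact ⟨Submodule.Quotient.mk (z * ↑u⁻¹), by simp [f]⟩
  have hfw : f (Submodule.Quotient.mk (w * ↑u⁻¹)) = f 0 := by simp [f, hw]
  exact (Submodule.Quotient.mk_eq_zero J).1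
    (IsNoetherian.injective_of_surjective_endomorphism f hf hfw)

end Radical

section LeftFractions

variable {R Q : Type*} [Ring R] [Ring Q] [IsNoetherianRing Q] (φ : R →+* Q)
  (hunit : ∀ c : R, IsRegular c → IsUnit (φ c))
  (hfrac : ∀ q : Q, ∃ c r : R, IsRegular c ∧ φ c * q = φ r)
include hunit hfrac

theorem Ideal.isTwoSided_map (I : Ideal R) [I.IsTwoSided] : (I.map φ).IsTwoSided := by
  have mul_map_mem (r : R) : ∀ w ∈ I.map φ, w * φ r ∈ I.map φ := by
    intro w hw
    have hle : I.map φ ≤ Submodule.comap (LinearMap.toSpanSingleton Q Q (φ r)) (I.map φ) :=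
      Ideal.map_le_iff_le_comap.2 fun x hx => by
        simpa using Ideal.mem_map_of_mem φ (I.mul_mem_right r hx)
    simpa using hle hw
  refine ⟨fun q hw => ?_⟩
  obtain ⟨c, r, hc, hcq⟩ := hfrac q
  obtain ⟨u, hu⟩ := hunit c hc
  have hq : q = ↑u⁻¹ * φ r := by rw [← hcq, ← hu, ← mul_assoc, Units.inv_mul, one_mul]
  rw [hq, ← mul_assoc]
  exact mul_map_mem r _ (Ideal.mul_inv_mem_of_mul_mem u (hu ▸ mul_map_mem c) hw)

theorem IsPrimeTwoSided.comap {P : Ideal Q} (hP : IsPrimeTwoSided P) :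
    IsPrimeTwoSided (P.comap φ) := by
  refine ⟨fun a ha r => ?_, Ideal.comap_ne_top φ hP.2.1, fun a b hab => hP.2.2 _ _ fun q => ?_⟩
  · simpa using hP.isTwoSided.mul_mem_of_left (φ r) ha
  have := Ideal.isTwoSided_map φ hunit hfrac (Ideal.span {a} * ⊤)
  have hle : (Ideal.span {a} * ⊤).map φ ≤
      Submodule.comap (LinearMap.toSpanSingleton Q Q (φ b)) P := by
    refine Ideal.map_le_iff_le_comap.2 (Ideal.mul_le.2 fun x hx r _ => ?_)
    obtain ⟨p, rfl⟩ := Ideal.mem_span_singleton'.1 hx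
    simpa [mul_assoc] using P.mul_mem_left (φ p) (hab r)
  have ha : φ a ∈ (Ideal.span {a} * ⊤).map φ :=
    Ideal.mem_map_of_mem φ (Ideal.mem_span_singleton_mul_top a)
  simpa using hle (Ideal.mul_mem_right q _ ha)

theorem primeRadical_le_comap : primeRadical R ≤ (primeRadical Q).comap φ :=
  fun _ hx => Submodule.mem_sInf.2 fun _ hP => Submodule.mem_sInf.1 hx _ (hP.comap φ hunit hfrac)

end LeftFractions

theorem stmt8_general {R Q : Type*} [Ring R] [Ring Q]
    (φ : R →+* Q) (hinj : Function.Injective φ)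
    (hunit : ∀ c : R, IsRegular c → IsUnit (φ c))
    (hfrac : ∀ q : Q, ∃ c r : R, IsRegular c ∧ φ c * q = φ r)
    [IsNoetherianRing Q] :
    primeRadical R = Ideal.comap φ (primeRadical Q) ∧
      IdealIsNilpotent (primeRadical R) := by
  have hnil : IdealIsNilpotent ((primeRadical Q).comap φ) :=
    (idealIsNilpotent_primeRadical Q).comap hinj
  have heq : primeRadical R = (primeRadical Q).comap φ :=
    le_antisymm (primeRadical_le_comap φ hunit hfrac) hnil.le_primeRadical
  exact ⟨heq, heq ▸ hnil⟩

/-- Let `R` be a ring whose set `C` of regular elements is a left Ore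
set, and suppose the left quotient ring `Q = C⁻¹R` (modelled by a ring `Q` and an
injective ring homomorphism `φ : R → Q` sending regular elements to units, every
element of `Q` being a left fraction) is left Noetherian. Then the prime radical `n` of
`R` satisfies `n = R ∩ n_Q`, where `n_Q` is the prime radical of `Q`; in particular `n`
is a nilpotent ideal of `R`. -/
theorem stmt8 {R Q : Type*} [Ring R] [Ring Q]
    (hOre : ∀ (r c : R), IsRegular c → ∃ c' r' : R, IsRegular c' ∧ c' * r = r' * c)
    (φ : R →+* Q) (hinj : Function.Injective φ)
    (hunit : ∀ c : R, IsRegular c → IsUnit (φ c))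
    (hfrac : ∀ q : Q, ∃ c r : R, IsRegular c ∧ φ c * q = φ r)
    [IsNoetherianRing Q] :
    primeRadical R = Ideal.comap φ (primeRadical Q) ∧
      IdealIsNilpotent (primeRadical R) :=
  stmt8_general φ hinj hunit hfrac
end

section
/- Let R be a ring whose regular elements C form a left Ore set with Q = C^{-1}R left Noetherian, and let n be the prime radical of R. Then C + n ⊆ C, i.e., c + a is a regular element of R whenever c is regular and a ∈ n. -/
/-!
Over `Q` the statement is easy: `φ c` is a unit and `φ a` lies in the prime radical of `Q`, so
`φ (c + a) = φ c * (1 + (φ c)⁻¹ * φ a)` with `(φ c)⁻¹ * φ a` nilpotent, because the prime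
radical of any ring is nil (a two-sided ideal maximal among those avoiding the powers of a
non-nilpotent element is prime). Since `φ` is injective, `c + a` is then regular in `R`.

The transfer `φ (primeRadical R) ⊆ primeRadical Q` amounts to contracting prime ideals of `Q`
to prime ideals of `R`. The one delicate point is that for a two-sided ideal `I` of `R` the left
ideal `Q φ(I)` is again two-sided: `Q φ(I)` is stable under right multiplication by `φ c`, and
since `Q` is left Noetherian, the ascending chain `{z | z φ(c)ⁿ ∈ Q φ(I)}` stabilizes, which
forces stability under `φ(c)⁻¹` as well.
-/

namespace Ideal

variable {R : Type*} [Semiring R]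

theorem mul_mem_of_mem_span {s : Set R} {t : R} {L : Ideal R} (h : ∀ a ∈ s, a * t ∈ L)
    {z : R} (hz : z ∈ span s) : z * t ∈ L :=
  (span_le (I := Submodule.comap (LinearMap.toSpanSingleton R R t) L)).2 h hz

instance isTwoSided_span_range_mul (x : R) : (span (Set.range (x * ·))).IsTwoSided :=
  ⟨fun t hz ↦ mul_mem_of_mem_span
    (by rintro _ ⟨r, rfl⟩; exact subset_span ⟨r * t, (mul_assoc x r t).symm⟩) hz⟩

theorem isTwoSided_sup_s9 (I J : Ideal R) [I.IsTwoSided] [J.IsTwoSided] : (I ⊔ J).IsTwoSided := by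
  refine ⟨fun t hz ↦ ?_⟩
  obtain ⟨i, hi, j, hj, rfl⟩ := Submodule.mem_sup.1 hz
  rw [add_mul]
  exact add_mem (mem_sup_left (mul_mem_right t I hi)) (mem_sup_right (mul_mem_right t J hj))

end Ideal

section PrimeRadical

variable {R : Type*} [Ring R]

theorem isPrimeTwoSided_of_maximal {b : R} {P : Ideal R}
    (hP : Maximal (fun I : Ideal R ↦ I.IsTwoSided ∧ ∀ n, b ^ n ∉ I) P) : IsPrimeTwoSided P := by
  obtain ⟨hPtwo, hPb⟩ := hP.prop
  have enlarge : ∀ x ∉ P, ∃ n, b ^ n ∈ P ⊔ Ideal.span (Set.range (x * ·)) := by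
    intro x hx
    by_contra! h
    have hle := hP.le_of_ge ⟨Ideal.isTwoSided_sup_s9 _ _, h⟩ le_sup_left
    exact hx (hle (Ideal.mem_sup_right (Ideal.subset_span ⟨1, mul_one x⟩)))
  refine ⟨fun a ha r ↦ Ideal.mul_mem_right r P ha, fun htop ↦ hPb 0 (htop ▸ trivial), ?_⟩
  intro x y hxy
  by_contra! hxyP
  obtain ⟨m, hm⟩ := enlarge x hxyP.1
  obtain ⟨n, hn⟩ := enlarge y hxyP.2
  have hprod :
      (P ⊔ Ideal.span (Set.range (x * ·))) * (P ⊔ Ideal.span (Set.range (y * ·))) ≤ P := by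
    rw [Ideal.sup_mul, Ideal.mul_sup, Ideal.mul_sup, Ideal.span_mul_span']
    refine sup_le (sup_le Ideal.mul_le_left Ideal.mul_le_left) (sup_le Ideal.mul_le_right ?_)
    rw [Ideal.span_le]
    rintro _ ⟨_, ⟨r, rfl⟩, _, ⟨s, rfl⟩, rfl⟩
    simpa only [SetLike.mem_coe, ← mul_assoc] using Ideal.mul_mem_right s P (hxy r)
  exact hPb (m + n) (pow_add b m n ▸ hprod (Ideal.mul_mem_mul hm hn))

theorem exists_isPrimeTwoSided_notMem {b : R} (hb : ¬IsNilpotent b) :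
    ∃ P : Ideal R, IsPrimeTwoSided P ∧ b ∉ P := by
  set S := {I : Ideal R | I.IsTwoSided ∧ ∀ n, b ^ n ∉ I}
  have hbot : ⊥ ∈ S := ⟨inferInstance, fun n h ↦ hb ⟨n, h⟩⟩
  have hchain : ∀ c ⊆ S, IsChain (· ≤ ·) c → ∀ J ∈ c, ∃ ub ∈ S, ∀ I ∈ c, I ≤ ub := by
    intro c hcS hc J hJ
    have hmem (x : R) : x ∈ sSup c ↔ ∃ I ∈ c, x ∈ I :=
      Submodule.mem_sSup_of_directed ⟨J, hJ⟩ hc.directedOn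
    refine ⟨sSup c, ⟨⟨fun t hx ↦ ?_⟩, fun n hn ↦ ?_⟩, fun I hI ↦ le_sSup hI⟩
    · obtain ⟨I, hI, hxI⟩ := (hmem _).1 hx
      have := (hcS hI).1
      exact (hmem _).2 ⟨I, hI, Ideal.mul_mem_right t I hxI⟩
    · obtain ⟨I, hI, hnI⟩ := (hmem _).1 hn
      exact (hcS hI).2 n hnI
  obtain ⟨P, -, hP⟩ := zorn_le_nonempty₀ S hchain ⊥ hbot
  exact ⟨P, isPrimeTwoSided_of_maximal hP, by simpa using hP.prop.2 1⟩

theorem isNilpotent_of_mem_primeRadical {b : R} (hb : b ∈ primeRadical R) : IsNilpotent b := by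
  by_contra h
  obtain ⟨P, hP, hbP⟩ := exists_isPrimeTwoSided_notMem h
  exact hbP (sInf_le (α := Ideal R) hP hb)

theorem isUnit_add_of_mem_primeRadical {u a : R} (hu : IsUnit u) (ha : a ∈ primeRadical R) :
    IsUnit (u + a) := by
  obtain ⟨u, rfl⟩ := hu
  have hnil : IsNilpotent (↑u⁻¹ * a) :=
    isNilpotent_of_mem_primeRadical (Ideal.mul_mem_left _ _ ha)
  have hfactor : (u : R) + a = u * (1 + ↑u⁻¹ * a) := by
    rw [mul_add, mul_one, Units.mul_inv_cancel_left]
  exact hfactor ▸ u.isUnit.mul hnil.isUnit_one_add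

end PrimeRadical

section Localization

variable {R Q : Type*} [Ring R] [Ring Q]

theorem Ideal.mul_inv_mem_of_mul_mem_s9 [IsNoetherianRing Q] {L : Ideal Q} (u : Qˣ)
    (hL : ∀ x ∈ L, x * u ∈ L) {x : Q} (hx : x ∈ L) : x * ↑u⁻¹ ∈ L := by
  let K : ℕ →o Ideal Q :=
    ⟨fun n ↦ Submodule.comap (LinearMap.toSpanSingleton Q Q ↑(u ^ n)) L,
      monotone_nat_of_le_succ fun n z hz ↦ by
        change z * ↑(u ^ (n + 1)) ∈ L
        rw [pow_succ, Units.val_mul, ← mul_assoc]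
        exact hL _ hz⟩
  obtain ⟨n, hn⟩ := monotone_stabilizes_iff_noetherian.2 inferInstance K
  have hmem : x * ↑(u⁻¹ ^ (n + 1)) ∈ K n := by
    rw [hn _ n.le_succ]
    change x * ↑(u⁻¹ ^ (n + 1)) * ↑(u ^ (n + 1)) ∈ L
    rwa [mul_assoc, ← Units.val_mul, inv_pow, inv_mul_cancel, Units.val_one, mul_one]
  have hcancel : u⁻¹ ^ (n + 1) * u ^ n = u⁻¹ := by group
  change x * ↑(u⁻¹ ^ (n + 1)) * ↑(u ^ n) ∈ L at hmem
  rwa [mul_assoc, ← Units.val_mul, hcancel] at hmem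

variable (φ : R →+* Q)

/-- Every element of `Q` is a left fraction `(φ c)⁻¹ * φ r`. -/
def RingHom.HasLeftFractions : Prop :=
  ∀ q : Q, ∃ c r : R, IsUnit (φ c) ∧ φ c * q = φ r

theorem Ideal.isTwoSided_map_of_hasLeftFractions [IsNoetherianRing Q]
    (hφ : φ.HasLeftFractions)
    (I : Ideal R) [I.IsTwoSided] : (I.map φ).IsTwoSided := by
  have hmulR (s : R) {z : Q} (hz : z ∈ I.map φ) : z * φ s ∈ I.map φ := by
    refine mul_mem_of_mem_span ?_ hz
    rintro _ ⟨i, hi, rfl⟩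
    rw [← map_mul]
    exact mem_map_of_mem φ (mul_mem_right s I hi)
  refine ⟨fun q hz ↦ ?_⟩
  obtain ⟨c, r, ⟨u, hu⟩, hcq⟩ := hφ q
  have hq : q = ↑u⁻¹ * φ r := by rw [← hcq, ← hu, Units.inv_mul_cancel_left]
  rw [hq, ← mul_assoc]
  exact hmulR r (mul_inv_mem_of_mul_mem_s9 u (hu ▸ fun x hx ↦ hmulR c hx) hz)

theorem IsPrimeTwoSided.comap_of_hasLeftFractions [IsNoetherianRing Q]
    (hφ : φ.HasLeftFractions)
    {P : Ideal Q} (hP : IsPrimeTwoSided P) : IsPrimeTwoSided (P.comap φ) := by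
  obtain ⟨hPright, hPtop, hPprime⟩ := hP
  refine ⟨fun a ha r ↦ ?_, Ideal.comap_ne_top φ hPtop, fun x y hxy ↦ ?_⟩
  · rw [Ideal.mem_comap, map_mul]
    exact hPright _ ha (φ r)
  set I := Ideal.span (Set.range (x * ·))
  have := Ideal.isTwoSided_map_of_hasLeftFractions φ hφ I
  have hxJ : φ x ∈ I.map φ := Ideal.mem_map_of_mem φ (Ideal.subset_span ⟨1, mul_one x⟩)
  have hIy {i : R} (hi : i ∈ I) : i * y ∈ P.comap φ :=
    Ideal.mul_mem_of_mem_span (by rintro _ ⟨r, rfl⟩; exact hxy r) hi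
  have hJy {z : Q} (hz : z ∈ I.map φ) : z * φ y ∈ P :=
    Ideal.mul_mem_of_mem_span (by rintro _ ⟨i, hi, rfl⟩; exact map_mul φ i y ▸ hIy hi) hz
  exact hPprime (φ x) (φ y) (fun q ↦ hJy (Ideal.mul_mem_right q _ hxJ))

theorem map_mem_primeRadical [IsNoetherianRing Q]
    (hφ : φ.HasLeftFractions)
    {a : R} (ha : a ∈ primeRadical R) : φ a ∈ primeRadical Q :=
  Submodule.mem_sInf.2 fun _ hP ↦
    sInf_le (α := Ideal R) (IsPrimeTwoSided.comap_of_hasLeftFractions φ hφ hP) ha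

variable {φ}

theorem isRegular_of_isUnit_map (hinj : Function.Injective φ) {r : R} (hr : IsUnit (φ r)) :
    IsRegular r := by
  refine ⟨fun a b h ↦ hinj ?_, fun a b h ↦ hinj ?_⟩
  · exact hr.isRegular.left (by simpa only [← map_mul] using congrArg φ h)
  · exact hr.isRegular.right (by simpa only [← map_mul] using congrArg φ h)

end Localization

theorem stmt9_general {R Q : Type*} [Ring R] [Ring Q]
    (φ : R →+* Q) (hinj : Function.Injective φ)
    (hunit : ∀ c : R, IsRegular c → IsUnit (φ c))
    (hfrac : ∀ q : Q, ∃ c r : R, IsRegular c ∧ φ c * q = φ r)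
    [IsNoetherianRing Q] :
    ∀ (c a : R), IsRegular c → a ∈ primeRadical R → IsRegular (c + a) := by
  intro c a hc ha
  have hQ : φ.HasLeftFractions := fun q ↦
    (hfrac q).imp fun c ⟨r, hc, hcq⟩ ↦ ⟨r, hunit c hc, hcq⟩
  refine isRegular_of_isUnit_map hinj ?_
  rw [map_add]
  exact isUnit_add_of_mem_primeRadical (hunit c hc) (map_mem_primeRadical φ hQ ha)

/-- Let `R` be a ring whose regular elements `C` form a left Ore set
with `Q = C⁻¹R` left Noetherian, and let `n` be the prime radical of `R`. Then
`C + n ⊆ C`, i.e. `c + a` is a regular element of `R` whenever `c` is regular and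
`a ∈ n`. -/
theorem stmt9 {R Q : Type*} [Ring R] [Ring Q]
    (hOre : ∀ (r c : R), IsRegular c → ∃ c' r' : R, IsRegular c' ∧ c' * r = r' * c)
    (φ : R →+* Q) (hinj : Function.Injective φ)
    (hunit : ∀ c : R, IsRegular c → IsUnit (φ c))
    (hfrac : ∀ q : Q, ∃ c r : R, IsRegular c ∧ φ c * q = φ r)
    [IsNoetherianRing Q] :
    ∀ (c a : R), IsRegular c → a ∈ primeRadical R → IsRegular (c + a) :=
  stmt9_general φ hinj hunit hfrac
end

section
/- Let R be a ring, C its set of regular elements assumed to be a left Ore set with Q = C^{-1}R left Noetherian. Then the image C̃ = π(C) of C in R̄ = R/n (n the prime radical) is a left denominator set of R̄ with zero kernel, and C̃^{-1}R̄ ≅ Q/n_Q is a semiprime left Noetherian ring. -/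
universe u

/-!
The prime radical consists of the strongly nilpotent elements, those `x` from which every
m-sequence `x, x t₀ x, …` reaches `0`; hence `n_Q ∩ R ⊆ n` along the injective map `R → Q`.
Conversely, since `Q` is left Noetherian, a left ideal of `Q` stable under right multiplication
by a regular `c` is also stable under `c⁻¹`, so every prime of `Q` contracts to a prime of `R`
and `n = n_Q ∩ R`. It follows that elements of `C` stay left and right regular modulo `n`, and
the universal property of `Q ≅ C⁻¹R` as an Ore localization gives a surjection `Q → C̃⁻¹R̄`
with kernel `n_Q`, so `C̃⁻¹R̄ ≅ Q/n_Q` is Noetherian, and semiprime because `n_Q` is.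
-/

section PrimeRadical

variable {S : Type*} [Ring S]

theorem mem_primeRadical_iff {x : S} :
    x ∈ primeRadical S ↔ ∀ P : Ideal S, IsPrimeTwoSided P → x ∈ P :=
  Submodule.mem_sInf

instance (S : Type*) [Ring S] : (primeRadical S).IsTwoSided :=
  ⟨fun b ha => mem_primeRadical_iff.2 fun P hP => hP.1 _ (mem_primeRadical_iff.1 ha P hP) b⟩

theorem mem_primeRadical_of_forall_mul_mul_mem {x : S} (hx : ∀ r, x * r * x ∈ primeRadical S) :
    x ∈ primeRadical S :=
  mem_primeRadical_iff.2 fun P hP =>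
    (hP.2.2 x x fun r => mem_primeRadical_iff.1 (hx r) P hP).elim id id

def IsMSequence (f : ℕ → S) : Prop :=
  ∀ i, ∃ t, f (i + 1) = f i * t * f i

def IsStronglyNilpotent (x : S) : Prop :=
  ∀ f : ℕ → S, IsMSequence f → f 0 = x → ∃ i, f i = 0

theorem IsMSequence.mem_of_le {f : ℕ → S} (hf : IsMSequence f) {I : TwoSidedIdeal S} {i j : ℕ}
    (hij : i ≤ j) (hi : f i ∈ I) : f j ∈ I := by
  induction j, hij using Nat.le_induction with
  | base => exact hi
  | succ j _ ih =>
    obtain ⟨t, ht⟩ := hf j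
    rw [ht]
    exact I.mul_mem_right _ _ (I.mul_mem_right _ _ ih)

namespace TwoSidedIdeal

theorem mul_mem_of_mem_span_singleton {I : TwoSidedIdeal S} {a b : S}
    (hab : ∀ r, a * r * b ∈ I) {x y : S} (hx : x ∈ span {a}) (hy : y ∈ span {b}) :
    x * y ∈ I := by
  have hay : ∀ r, a * r * y ∈ I := by
    induction hy using span_induction with
    | mem y hy => rwa [Set.mem_singleton_iff.1 hy]
    | zero => simp [I.zero_mem]
    | add y z _ _ hy hz => simpa only [mul_add] using fun r => I.add_mem (hy r) (hz r)
    | neg y _ hy => simpa only [mul_neg] using fun r => I.neg_mem (hy r)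
    | left_absorb s y _ hy => simpa only [mul_assoc] using fun r => hy (r * s)
    | right_absorb s y _ hy => simpa only [← mul_assoc] using fun r => I.mul_mem_right _ s (hy r)
  suffices ∀ r, x * r * y ∈ I by simpa using this 1
  induction hx using span_induction with
  | mem x hx => rwa [Set.mem_singleton_iff.1 hx]
  | zero => simp [I.zero_mem]
  | add x z _ _ hx hz => simpa only [add_mul] using fun r => I.add_mem (hx r) (hz r)
  | neg x _ hx => simpa only [neg_mul] using fun r => I.neg_mem (hx r)
  | left_absorb s x _ hx => simpa only [mul_assoc] using fun r => I.mul_mem_left s _ (hx r)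
  | right_absorb s x _ hx => simpa only [mul_assoc] using fun r => hx (s * r)

theorem exists_coe_eq_biUnion_of_isChain {c : Set (TwoSidedIdeal S)}
    (hchain : IsChain (· ≤ ·) c) (hc : c.Nonempty) : ∃ J : TwoSidedIdeal S,
      (J : Set S) = ⋃ I ∈ c, (I : Set S) := by
  obtain ⟨I₀, hI₀⟩ := hc
  have hsup : ∀ {x y : S} {I J}, I ∈ c → J ∈ c → x ∈ I → y ∈ J → ∃ K ∈ c, x ∈ K ∧ y ∈ K := by
    intro x y I J hI hJ hx hy
    rcases hchain.total hI hJ with h | h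
    exacts [⟨J, hJ, h hx, hy⟩, ⟨I, hI, hx, h hy⟩]
  refine ⟨mk' (⋃ I ∈ c, (I : Set S)) (Set.mem_biUnion hI₀ I₀.zero_mem) ?_ ?_ ?_ ?_, coe_mk' ..⟩
  all_goals simp only [Set.mem_iUnion₂, SetLike.mem_coe]
  · rintro x y ⟨I, hI, hx⟩ ⟨J, hJ, hy⟩
    obtain ⟨K, hK, hxK, hyK⟩ := hsup hI hJ hx hy
    exact ⟨K, hK, K.add_mem hxK hyK⟩
  · exact fun ⟨I, hI, hx⟩ => ⟨I, hI, I.neg_mem hx⟩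
  · exact fun ⟨I, hI, hy⟩ => ⟨I, hI, I.mul_mem_left _ _ hy⟩
  · exact fun ⟨I, hI, hx⟩ => ⟨I, hI, I.mul_mem_right _ _ hx⟩

theorem exists_maximal_forall_notMem {f : ℕ → S} (hf : ∀ i, f i ≠ 0) :
    ∃ M : TwoSidedIdeal S, Maximal (fun I : TwoSidedIdeal S => ∀ i, f i ∉ I) M := by
  refine (zorn_le_nonempty₀ {I : TwoSidedIdeal S | ∀ i, f i ∉ I} (fun c hc hchain I₀ hI₀ => ?_) ⊥
    fun i h => hf i ((mem_bot S).1 h)).imp fun _ h => h.2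
  obtain ⟨J, hJ⟩ := exists_coe_eq_biUnion_of_isChain hchain ⟨I₀, hI₀⟩
  refine ⟨J, fun i hi => ?_, fun I hI x hx => ?_⟩
  · rw [← SetLike.mem_coe, hJ, Set.mem_iUnion₂] at hi
    obtain ⟨I, hI, hfi⟩ := hi
    exact hc hI i hfi
  · rw [← SetLike.mem_coe, hJ]
    exact Set.mem_biUnion hI hx

end TwoSidedIdeal

open TwoSidedIdeal in
theorem IsMSequence.exists_isPrimeTwoSided {f : ℕ → S} (hf : IsMSequence f)
    (hf0 : ∀ i, f i ≠ 0) : ∃ P : Ideal S, IsPrimeTwoSided P ∧ ∀ i, f i ∉ P := by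
  obtain ⟨M, hM⟩ := exists_maximal_forall_notMem hf0
  have hgen : ∀ a ∉ M, ∃ i, f i ∈ M ⊔ span {a} := by
    intro a ha
    by_contra! h
    exact ha (hM.eq_of_ge h le_sup_left ▸ mem_sup_right (subset_span rfl))
  refine ⟨asIdeal M, ⟨fun a ha r => M.mul_mem_right a r ha, fun h => hM.prop 0 ?_, ?_⟩, hM.prop⟩
  · exact mem_asIdeal.1 (h ▸ Submodule.mem_top)
  intro a b hab
  by_contra! hnot
  obtain ⟨i, hi⟩ := hgen a hnot.1
  obtain ⟨j, hj⟩ := hgen b hnot.2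
  obtain ⟨m₁, hm₁, z₁, hz₁, h₁⟩ := mem_sup.1 (hf.mem_of_le (le_max_left i j) hi)
  obtain ⟨m₂, hm₂, z₂, hz₂, h₂⟩ := mem_sup.1 (hf.mem_of_le (le_max_right i j) hj)
  obtain ⟨t, ht⟩ := hf (max i j)
  apply hM.prop (max i j + 1)
  have hsplit : f (max i j + 1) = m₁ * t * (m₂ + z₂) + z₁ * t * m₂ + z₁ * t * z₂ := by
    rw [ht]
    nth_rw 1 [← h₁]
    rw [← h₂]
    noncomm_ring
  rw [hsplit]
  refine M.add_mem (M.add_mem ?_ ?_) ?_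
  · exact M.mul_mem_right _ _ (M.mul_mem_right _ _ hm₁)
  · exact M.mul_mem_left _ _ hm₂
  · exact mul_mem_of_mem_span_singleton hab (mul_mem_right _ _ _ hz₁) hz₂

end PrimeRadical

section StronglyNilpotent

variable {S T : Type*} [Ring S] [Ring T]

theorem IsPrimeTwoSided.exists_isMSequence_forall_notMem {P : Ideal S} (hP : IsPrimeTwoSided P)
    {x : S} (hx : x ∉ P) : ∃ f : ℕ → S, IsMSequence f ∧ f 0 = x ∧ ∀ i, f i ∉ P := by
  have hstep : ∀ y ∉ P, ∃ t, y * t * y ∉ P := by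
    intro y hy
    by_contra! h
    exact hy ((hP.2.2 y y h).elim id id)
  choose! t ht using hstep
  let g : S → S := fun y => y * t y * y
  have hg : ∀ i, g^[i] x ∉ P := by
    intro i
    induction i with
    | zero => exact hx
    | succ i ih => rw [Function.iterate_succ_apply']; exact ht _ ih
  exact ⟨fun i => g^[i] x, fun i => ⟨t (g^[i] x), Function.iterate_succ_apply' g i x⟩, rfl, hg⟩

theorem mem_primeRadical_iff_isStronglyNilpotent {x : S} :
    x ∈ primeRadical S ↔ IsStronglyNilpotent x := by
  constructor
  · intro hx f hf hf0
    by_contra! h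
    obtain ⟨P, hP, hfP⟩ := hf.exists_isPrimeTwoSided h
    exact hfP 0 (hf0 ▸ mem_primeRadical_iff.1 hx P hP)
  · refine fun hx => mem_primeRadical_iff.2 fun P hP => ?_
    by_contra hxP
    obtain ⟨f, hf, hf0, hfP⟩ := hP.exists_isMSequence_forall_notMem hxP
    obtain ⟨i, hi⟩ := hx f hf hf0
    exact hfP i (hi ▸ P.zero_mem)

theorem IsMSequence.map {f : ℕ → S} (hf : IsMSequence f) (φ : S →+* T) : IsMSequence (φ ∘ f) :=
  fun i => let ⟨t, ht⟩ := hf i; ⟨φ t, by simp [ht]⟩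

theorem IsStronglyNilpotent.of_map {φ : S →+* T} (hφ : Function.Injective φ) {x : S}
    (hx : IsStronglyNilpotent (φ x)) : IsStronglyNilpotent x := fun f hf hf0 =>
  let ⟨i, hi⟩ := hx _ (hf.map φ) (by simp [hf0])
  ⟨i, hφ (by simpa using hi)⟩

theorem comap_primeRadical_le_of_injective {φ : S →+* T} (hφ : Function.Injective φ) :
    (primeRadical T).comap φ ≤ primeRadical S := fun _ hx =>
  mem_primeRadical_iff_isStronglyNilpotent.2
    ((mem_primeRadical_iff_isStronglyNilpotent.1 hx).of_map hφ)

end StronglyNilpotent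

theorem Submodule.comap_eq_self_of_le_comap {R M : Type*} [Semiring R] [AddCommMonoid M]
    [Module R M] [IsNoetherian R M] {g : Module.End R M} (hg : Function.Surjective g)
    {N : Submodule R M} (hN : N ≤ N.comap g) : N.comap g = N := by
  have hpow : ∀ k, N.comap (g ^ (k + 1)) = (N.comap g).comap (g ^ k) := fun k => by
    rw [pow_succ', Module.End.mul_eq_comp, Submodule.comap_comp]
  let F : ℕ →o Submodule R M :=
    ⟨fun k => N.comap (g ^ k), monotone_nat_of_le_succ fun k => by
      rw [hpow]; exact Submodule.comap_mono hN⟩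
  obtain ⟨n, hn⟩ := monotone_stabilizes_iff_noetherian.2 ‹_› F
  have hsurj : Function.Surjective (g ^ n) := by
    rw [Module.End.coe_pow]; exact hg.iterate n
  refine Submodule.comap_injective_of_surjective hsurj ?_
  rw [← hpow]
  exact (hn (n + 1) n.le_succ).symm

theorem Ideal.mul_unit_mem_iff_mem_of_isTwoSided {S : Type*} [Ring S] (I : Ideal S) [I.IsTwoSided]
    {x y : S} (hy : IsUnit y) : x * y ∈ I ↔ x ∈ I :=
  ⟨fun h => by simpa [mul_assoc] using I.mul_mem_right (↑hy.unit⁻¹) h, I.mul_mem_right y⟩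

namespace OreLocalization

open nonZeroDivisors

variable {R T : Type*} [Ring R] [Ring T] [OreSet R⁰]

noncomputable def liftOfRegular (f : R →+* T) (hf : ∀ c : R, IsRegular c → IsUnit (f c)) :
    OreLocalization R⁰ R →+* T :=
  universalHom f
    (IsUnit.liftRight (f.toMonoidHom.comp R⁰.subtype) fun c =>
      hf c (isRegular_iff_mem_nonZeroDivisors.2 c.2))
    fun c => (IsUnit.coe_liftRight (f.toMonoidHom.comp R⁰.subtype) _ c).symm

variable (f : R →+* T) (hf : ∀ c : R, IsRegular c → IsUnit (f c))

theorem mul_liftOfRegular_oreDiv (r : R) (s : R⁰) :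
    f s * liftOfRegular f hf (r /ₒ s) = f r :=
  Units.mul_inv_cancel_left (IsUnit.liftRight (f.toMonoidHom.comp R⁰.subtype) _ s) (f r)

theorem liftOfRegular_numeratorHom (r : R) : liftOfRegular f hf (numeratorHom r) = f r :=
  universalHom_commutes ..

end OreLocalization

structure IsLeftQuotientRing {R Q : Type*} [Ring R] [Ring Q] (φ : R →+* Q) : Prop where
  injective : Function.Injective φ
  isUnit : ∀ c : R, IsRegular c → IsUnit (φ c)
  exists_mul_eq : ∀ q : Q, ∃ c r : R, IsRegular c ∧ φ c * q = φ r

namespace IsLeftQuotientRing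

open OreLocalization nonZeroDivisors

variable {R Q T : Type*} [Ring R] [Ring Q] [Ring T] {φ : R →+* Q}

theorem ore (hφ : IsLeftQuotientRing φ) (r : R) {c : R} (hc : IsRegular c) :
    ∃ c' r' : R, IsRegular c' ∧ c' * r = r' * c := by
  obtain ⟨c', r', hc', h⟩ := hφ.exists_mul_eq (φ r * ↑(hφ.isUnit c hc).unit⁻¹)
  refine ⟨c', r', hc', hφ.injective ?_⟩
  rw [map_mul, map_mul, ← h, mul_assoc, mul_assoc, IsUnit.val_inv_mul, mul_one]

theorem nonempty_oreSet (hφ : IsLeftQuotientRing φ) : Nonempty (OreSet R⁰) :=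
  nonempty_oreSet_iff.2
    ⟨fun _ _ s h => ⟨1, by rw [(isRegular_iff_mem_nonZeroDivisors.2 s.2).2 h]⟩,
      fun r s =>
        let ⟨c', r', hc', h⟩ := hφ.ore r (isRegular_iff_mem_nonZeroDivisors.2 s.2)
        ⟨r', ⟨c', hc'.mem_nonZeroDivisors⟩, h⟩⟩

theorem bijective_liftOfRegular (hφ : IsLeftQuotientRing φ) [OreSet R⁰] :
    Function.Bijective (liftOfRegular φ hφ.isUnit) := by
  refine ⟨(injective_iff_map_eq_zero _).2 fun x hx => ?_, fun q => ?_⟩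
  · induction x using OreLocalization.ind with
    | _ r s =>
      have h := mul_liftOfRegular_oreDiv φ hφ.isUnit r s
      rw [hx, mul_zero, eq_comm, ← map_zero φ] at h
      rw [hφ.injective h, zero_oreDiv]
  · obtain ⟨c, r, hc, h⟩ := hφ.exists_mul_eq q
    refine ⟨r /ₒ ⟨c, hc.mem_nonZeroDivisors⟩, (hφ.isUnit c hc).mul_left_cancel ?_⟩
    rw [h]
    exact mul_liftOfRegular_oreDiv φ hφ.isUnit r ⟨c, _⟩

theorem exists_ringHom_comp_eq (hφ : IsLeftQuotientRing φ) (η : R →+* T)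
    (hη : ∀ c : R, IsRegular c → IsUnit (η c)) : ∃ χ : Q →+* T, ∀ r, χ (φ r) = η r := by
  obtain ⟨_⟩ := hφ.nonempty_oreSet
  let e := RingEquiv.ofBijective _ hφ.bijective_liftOfRegular
  refine ⟨(liftOfRegular η hη).comp e.symm.toRingHom, fun r => ?_⟩
  have he : e.symm (φ r) = numeratorHom r :=
    e.symm_apply_eq.2 (liftOfRegular_numeratorHom φ hφ.isUnit r).symm
  simp only [RingHom.comp_apply, RingEquiv.toRingHom_eq_coe, RingEquiv.coe_toRingHom, he,
    liftOfRegular_numeratorHom]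

theorem isPrimeTwoSided_comap (hφ : IsLeftQuotientRing φ) [IsNoetherianRing Q] {P : Ideal Q}
    (hP : IsPrimeTwoSided P) : IsPrimeTwoSided (P.comap φ) := by
  refine ⟨fun a ha r => by simpa using hP.1 _ ha (φ r), fun h => hP.2.1 ?_, fun a b hab => ?_⟩
  · rw [Ideal.eq_top_iff_one] at h ⊢
    simpa using h
  let X : Ideal Q := ⨅ s : R, Submodule.comap (LinearMap.toSpanSingleton Q Q (φ s * φ b)) P
  have hX : ∀ x, x ∈ X ↔ ∀ s, x * φ s * φ b ∈ P := by simp [X, mul_assoc]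
  -- `X` is stable under right multiplication by `φ c`; left Noetherianity makes it stable
  -- under `(φ c)⁻¹` as well, which is what turns `φ a R φ b ⊆ P` into `φ a Q φ b ⊆ P`.
  have hXc : ∀ c, IsRegular c → Submodule.comap (LinearMap.toSpanSingleton Q Q (φ c)) X = X := by
    intro c hc
    refine Submodule.comap_eq_self_of_le_comap
      (fun y => ⟨y * (↑(hφ.isUnit c hc).unit⁻¹ : Q), by simp [mul_assoc]⟩)
      fun x hx => (hX _).2 fun s => ?_
    simpa [mul_assoc] using (hX x).1 hx (c * s)
  have key : ∀ q, φ a * q * φ b ∈ P := by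
    intro q
    obtain ⟨c, r, hc, hq⟩ := hφ.exists_mul_eq q
    have hmem : φ a * ↑(hφ.isUnit c hc).unit⁻¹ ∈ X := by
      rw [← hXc c hc, Submodule.mem_comap, LinearMap.toSpanSingleton_apply, smul_eq_mul,
        mul_assoc, IsUnit.val_inv_mul, mul_one]
      exact (hX _).2 fun s => by simpa using hab s
    have hq' : q = ↑(hφ.isUnit c hc).unit⁻¹ * φ r := by
      rw [← hq, ← mul_assoc, IsUnit.val_inv_mul, one_mul]
    simpa [hq', mul_assoc] using (hX _).1 hmem r
  exact hP.2.2 _ _ key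

theorem comap_primeRadical (hφ : IsLeftQuotientRing φ) [IsNoetherianRing Q] :
    (primeRadical Q).comap φ = primeRadical R :=
  le_antisymm (comap_primeRadical_le_of_injective hφ.injective) fun _ hx =>
    mem_primeRadical_iff.2 fun _ hP => mem_primeRadical_iff.1 hx _ (hφ.isPrimeTwoSided_comap hP)

theorem mul_mem_primeRadical_iff_left (hφ : IsLeftQuotientRing φ) [IsNoetherianRing Q] {c : R}
    (hc : IsRegular c) {r : R} : c * r ∈ primeRadical R ↔ r ∈ primeRadical R := by
  rw [← hφ.comap_primeRadical, Ideal.mem_comap, Ideal.mem_comap, map_mul,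
    Ideal.unit_mul_mem_iff_mem _ (hφ.isUnit c hc)]

theorem mul_mem_primeRadical_iff_right (hφ : IsLeftQuotientRing φ) [IsNoetherianRing Q] {c : R}
    (hc : IsRegular c) {r : R} : r * c ∈ primeRadical R ↔ r ∈ primeRadical R := by
  rw [← hφ.comap_primeRadical, Ideal.mem_comap, Ideal.mem_comap, map_mul,
    Ideal.mul_unit_mem_iff_mem_of_isTwoSided _ (hφ.isUnit c hc)]

theorem exists_surjective_ker_eq_primeRadical (hφ : IsLeftQuotientRing φ) [IsNoetherianRing Q]
    (η : R →+* T) (hη : ∀ c : R, IsRegular c → IsUnit (η c))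
    (hfrac : ∀ t : T, ∃ c r : R, IsRegular c ∧ η c * t = η r)
    (hker : ∀ r : R, η r = 0 ↔ r ∈ primeRadical R) :
    ∃ χ : Q →+* T, Function.Surjective χ ∧ ∀ q : Q, χ q = 0 ↔ q ∈ primeRadical Q := by
  obtain ⟨χ, hχ⟩ := hφ.exists_ringHom_comp_eq η hη
  refine ⟨χ, fun t => ?_, fun q => ?_⟩
  · obtain ⟨c, r, hc, h⟩ := hfrac t
    refine ⟨↑(hφ.isUnit c hc).unit⁻¹ * φ r, (hη c hc).mul_left_cancel ?_⟩
    rw [h, ← hχ, ← hχ, ← map_mul, ← mul_assoc, IsUnit.mul_val_inv, one_mul]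
  · obtain ⟨c, r, hc, h⟩ := hφ.exists_mul_eq q
    have hχq : η c * χ q = η r := by rw [← hχ, ← hχ, ← map_mul, h]
    rw [← (hη c hc).mul_right_eq_zero, hχq, hker, ← hφ.comap_primeRadical, Ideal.mem_comap, ← h,
      Ideal.unit_mul_mem_iff_mem _ (hφ.isUnit c hc)]

end IsLeftQuotientRing

theorem RingHom.eq_zero_of_forall_mul_mul_eq_zero {Q T : Type*} [Ring Q] [Ring T] (χ : Q →+* T)
    (hχ : Function.Surjective χ) (hker : ∀ q : Q, χ q = 0 ↔ q ∈ primeRadical Q) {a : T}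
    (ha : ∀ x : T, a * x * a = 0) : a = 0 := by
  obtain ⟨q, rfl⟩ := hχ a
  exact (hker q).2 (mem_primeRadical_of_forall_mul_mul_mem fun p => (hker _).1 (by simp [ha]))

theorem stmt10_general {R Q Rbar : Type u} [Ring R] [Ring Q] [Ring Rbar]
    (φ : R →+* Q) (hinj : Function.Injective φ)
    (hunit : ∀ c : R, IsRegular c → IsUnit (φ c))
    (hfrac : ∀ q : Q, ∃ c r : R, IsRegular c ∧ φ c * q = φ r)
    [IsNoetherianRing Q]
    (ψ : R →+* Rbar) (hψsurj : Function.Surjective ψ)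
    (hψker : ∀ r : R, ψ r = 0 ↔ r ∈ primeRadical R) :
    -- `C̃` is a left Ore set of `R̄` …
    (∀ (rb : Rbar) (c : R), IsRegular c →
      ∃ c' r' : R, IsRegular c' ∧ ∃ rb' : Rbar, ψ c' * rb = rb' * ψ c) ∧
    -- … with zero left kernel (so it is a left denominator set with `ass = 0`) …
    (∀ c : R, IsRegular c → ∀ rb : Rbar, ψ c * rb = 0 → rb = 0) ∧
    (∀ c : R, IsRegular c → ∀ rb : Rbar, rb * ψ c = 0 → rb = 0) ∧
    -- … and `C̃⁻¹R̄` is a semiprime left Noetherian ring isomorphic to `Q/n_Q`.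
    (∀ (Qt : Type u) [Ring Qt] (θ : Rbar →+* Qt), Function.Injective θ →
      (∀ c : R, IsRegular c → IsUnit (θ (ψ c))) →
      (∀ q : Qt, ∃ c : R, IsRegular c ∧ ∃ rb : Rbar, θ (ψ c) * q = θ rb) →
      IsNoetherianRing Qt ∧
      (∀ a : Qt, (∀ x : Qt, a * x * a = 0) → a = 0) ∧
      ∃ χ : Q →+* Qt, Function.Surjective χ ∧
        ∀ q : Q, χ q = 0 ↔ q ∈ primeRadical Q) := by
  have hφ : IsLeftQuotientRing φ := ⟨hinj, hunit, hfrac⟩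
  refine ⟨fun rb c hc => ?_, fun c hc rb h => ?_, fun c hc rb h => ?_, ?_⟩
  · obtain ⟨r, rfl⟩ := hψsurj rb
    obtain ⟨c', r', hc', h⟩ := hφ.ore r hc
    exact ⟨c', r', hc', ψ r', by rw [← map_mul, ← map_mul, h]⟩
  · obtain ⟨r, rfl⟩ := hψsurj rb
    rwa [← map_mul, hψker, hφ.mul_mem_primeRadical_iff_left hc, ← hψker] at h
  · obtain ⟨r, rfl⟩ := hψsurj rb
    rwa [← map_mul, hψker, hφ.mul_mem_primeRadical_iff_right hc, ← hψker] at h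
  intro Qt _ θ hθ hθunit hθfrac
  obtain ⟨χ, hχ, hker⟩ := hφ.exists_surjective_ker_eq_primeRadical (θ.comp ψ) hθunit
    (fun t => by
      obtain ⟨c, hc, rb, h⟩ := hθfrac t
      obtain ⟨r, rfl⟩ := hψsurj rb
      exact ⟨c, r, hc, h⟩)
    (fun r => by rw [RingHom.comp_apply, map_eq_zero_iff θ hθ, hψker])
  exact ⟨isNoetherianRing_of_surjective Q Qt χ hχ,
    fun _ => χ.eq_zero_of_forall_mul_mul_eq_zero hχ hker, χ, hχ, hker⟩

/-- Let `R` be a ring whose regular elements `C` form a left Ore set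
with `Q = C⁻¹R` left Noetherian, and let `n` be the prime radical of `R`, with
`R̄ = R/n` modelled by a surjective ring homomorphism `ψ : R → R̄` with kernel `n`.
Then the image `C̃ = ψ(C)` of `C` in `R̄` is a left denominator set of `R̄` with zero
kernel, and `C̃⁻¹R̄ ≅ Q/n_Q` is a semiprime left Noetherian ring: any localization `Qt`
of `R̄` at `C̃` is left Noetherian, semiprime, and isomorphic to `Q/n_Q` (i.e. admits a
surjection from `Q` with kernel `n_Q`). -/
theorem stmt10 {R Q Rbar : Type u} [Ring R] [Ring Q] [Ring Rbar]
    (hOre : ∀ (r c : R), IsRegular c → ∃ c' r' : R, IsRegular c' ∧ c' * r = r' * c)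
    (φ : R →+* Q) (hinj : Function.Injective φ)
    (hunit : ∀ c : R, IsRegular c → IsUnit (φ c))
    (hfrac : ∀ q : Q, ∃ c r : R, IsRegular c ∧ φ c * q = φ r)
    [IsNoetherianRing Q]
    (ψ : R →+* Rbar) (hψsurj : Function.Surjective ψ)
    (hψker : ∀ r : R, ψ r = 0 ↔ r ∈ primeRadical R) :
    -- `C̃` is a left Ore set of `R̄` …
    (∀ (rb : Rbar) (c : R), IsRegular c →
      ∃ c' r' : R, IsRegular c' ∧ ∃ rb' : Rbar, ψ c' * rb = rb' * ψ c) ∧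
    -- … with zero left kernel (so it is a left denominator set with `ass = 0`) …
    (∀ c : R, IsRegular c → ∀ rb : Rbar, ψ c * rb = 0 → rb = 0) ∧
    (∀ c : R, IsRegular c → ∀ rb : Rbar, rb * ψ c = 0 → rb = 0) ∧
    -- … and `C̃⁻¹R̄` is a semiprime left Noetherian ring isomorphic to `Q/n_Q`.
    (∀ (Qt : Type u) [Ring Qt] (θ : Rbar →+* Qt), Function.Injective θ →
      (∀ c : R, IsRegular c → IsUnit (θ (ψ c))) →
      (∀ q : Qt, ∃ c : R, IsRegular c ∧ ∃ rb : Rbar, θ (ψ c) * q = θ rb) →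
      IsNoetherianRing Qt ∧
      (∀ a : Qt, (∀ x : Qt, a * x * a = 0) → a = 0) ∧
      ∃ χ : Q →+* Qt, Function.Surjective χ ∧
        ∀ q : Q, χ q = 0 ↔ q ∈ primeRadical Q) :=
  stmt10_general φ hinj hunit hfrac ψ hψsurj hψker
end

section
/- Let R be a ring and S, T submonoids of the multiplicative monoid of R that are both left Ore sets. If the submonoid ST generated by S and T does not contain 0, then ST is a left Ore set of R. -/
/-!
For a submonoid `N`, the elements `s` admitting, for every `r`, a left Ore completion
`s' * r = r' * s` with `s' ∈ N` form a submonoid: from `s₁ * r = r₁ * b` and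
`s₂ * r₁ = r₂ * a` one gets `(s₂ * s₁) * r = r₂ * (a * b)`. It contains `S` and `T`,
hence `S ⊔ T`.
-/

namespace Submonoid

variable {M : Type*} [Monoid M]

def leftOreLocus (N : Submonoid M) : Submonoid M where
  carrier := {s | ∀ r : M, ∃ s' ∈ N, ∃ r' : M, s' * r = r' * s}
  one_mem' r := ⟨1, N.one_mem, r, by rw [one_mul, mul_one]⟩
  mul_mem' {a b} ha hb r := by
    obtain ⟨s₁, hs₁, r₁, h₁⟩ := hb r
    obtain ⟨s₂, hs₂, r₂, h₂⟩ := ha r₁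
    exact ⟨s₂ * s₁, N.mul_mem hs₂ hs₁, r₂, by rw [mul_assoc, h₁, ← mul_assoc, h₂, mul_assoc]⟩

theorem le_leftOreLocus_of_le {N K : Submonoid M} (hK : K ≤ N)
    (hOre : ∀ r : M, ∀ s ∈ K, ∃ s' ∈ K, ∃ r' : M, s' * r = r' * s) :
    K ≤ N.leftOreLocus := fun s hs r => by
  obtain ⟨s', hs', r', h⟩ := hOre r s hs
  exact ⟨s', hK hs', r', h⟩

end Submonoid

theorem stmt11_general {R : Type*} [Ring R] (S T : Submonoid R)
    (hOreS : ∀ (r : R), ∀ s ∈ S, ∃ s' ∈ S, ∃ r' : R, s' * r = r' * s)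
    (hOreT : ∀ (r : R), ∀ s ∈ T, ∃ s' ∈ T, ∃ r' : R, s' * r = r' * s) :
    ∀ (r : R), ∀ s ∈ (S ⊔ T : Submonoid R),
      ∃ s' ∈ (S ⊔ T : Submonoid R), ∃ r' : R, s' * r = r' * s :=
  fun r _ hs => sup_le (Submonoid.le_leftOreLocus_of_le le_sup_left hOreS)
    (Submonoid.le_leftOreLocus_of_le le_sup_right hOreT) hs r

/-- Let `R` be a ring and `S, T` submonoids of the multiplicative
monoid of `R` that are both left Ore sets. If the submonoid `ST` generated by `S` and
`T` does not contain `0`, then `ST` is a left Ore set of `R`. -/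
theorem stmt11 {R : Type*} [Ring R] (S T : Submonoid R)
    (h0S : (0 : R) ∉ S) (h0T : (0 : R) ∉ T)
    (hOreS : ∀ (r : R), ∀ s ∈ S, ∃ s' ∈ S, ∃ r' : R, s' * r = r' * s)
    (hOreT : ∀ (r : R), ∀ s ∈ T, ∃ s' ∈ T, ∃ r' : R, s' * r = r' * s)
    (h0 : (0 : R) ∉ (S ⊔ T : Submonoid R)) :
    ∀ (r : R), ∀ s ∈ (S ⊔ T : Submonoid R),
      ∃ s' ∈ (S ⊔ T : Submonoid R), ∃ r' : R, s' * r = r' * s :=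
  stmt11_general S T hOreS hOreT
end

section
/- Let R be a ring and S, T left denominator sets of R. If the multiplicative submonoid ST generated by S and T does not contain 0, then ST is a left denominator set of R. -/
/-!
For a submonoid `U`, the elements `s` satisfying the left Ore condition (resp. the left
reversibility condition) with witnesses taken in `U` form a submonoid, monotone in `U`: the
witnesses for a product `a * b` are obtained by applying the condition first to `b` and then
to `a`. Since `S` and `T` each satisfy both conditions, so does the submonoid `S ⊔ T` they
generate.
-/

namespace Submonoid

section Ore

variable {M : Type*} [Monoid M]

def leftOreSubmonoid (U : Submonoid M) : Submonoid M where
  carrier := {s | ∀ r : M, ∃ s' ∈ U, ∃ r' : M, s' * r = r' * s}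
  one_mem' r := ⟨1, U.one_mem, r, by rw [one_mul, mul_one]⟩
  mul_mem' {a b} ha hb r := by
    obtain ⟨s₁, hs₁, r₁, h₁⟩ := hb r
    obtain ⟨s₂, hs₂, r₂, h₂⟩ := ha r₁
    refine ⟨s₂ * s₁, U.mul_mem hs₂ hs₁, r₂, ?_⟩
    calc s₂ * s₁ * r = s₂ * r₁ * b := by rw [mul_assoc, h₁, mul_assoc]
      _ = r₂ * (a * b) := by rw [h₂, mul_assoc]

theorem leftOreSubmonoid_mono {U V : Submonoid M} (h : U ≤ V) :
    U.leftOreSubmonoid ≤ V.leftOreSubmonoid := fun _ hs r =>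
  let ⟨s', hs', r', he⟩ := hs r
  ⟨s', h hs', r', he⟩

theorem sup_le_leftOreSubmonoid {U V : Submonoid M} (hU : U ≤ U.leftOreSubmonoid)
    (hV : V ≤ V.leftOreSubmonoid) : U ⊔ V ≤ (U ⊔ V).leftOreSubmonoid :=
  sup_le (hU.trans (leftOreSubmonoid_mono le_sup_left))
    (hV.trans (leftOreSubmonoid_mono le_sup_right))

end Ore

section Reversible

variable {M : Type*} [MonoidWithZero M]

def leftReversibleSubmonoid (U : Submonoid M) : Submonoid M where
  carrier := {s | ∀ r : M, r * s = 0 → ∃ t ∈ U, t * r = 0}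
  one_mem' r hr := ⟨1, U.one_mem, by rwa [one_mul, ← mul_one r]⟩
  mul_mem' {a b} ha hb r hr := by
    obtain ⟨t₁, ht₁, h₁⟩ := hb (r * a) (by rwa [mul_assoc])
    obtain ⟨t₂, ht₂, h₂⟩ := ha (t₁ * r) (by rwa [mul_assoc])
    exact ⟨t₂ * t₁, U.mul_mem ht₂ ht₁, by rwa [mul_assoc]⟩

theorem leftReversibleSubmonoid_mono {U V : Submonoid M} (h : U ≤ V) :
    U.leftReversibleSubmonoid ≤ V.leftReversibleSubmonoid := fun _ hs r hr =>
  let ⟨t, ht, he⟩ := hs r hr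
  ⟨t, h ht, he⟩

theorem sup_le_leftReversibleSubmonoid {U V : Submonoid M}
    (hU : U ≤ U.leftReversibleSubmonoid) (hV : V ≤ V.leftReversibleSubmonoid) :
    U ⊔ V ≤ (U ⊔ V).leftReversibleSubmonoid :=
  sup_le (hU.trans (leftReversibleSubmonoid_mono le_sup_left))
    (hV.trans (leftReversibleSubmonoid_mono le_sup_right))

end Reversible

end Submonoid

theorem stmt12_general {R : Type*} [Ring R] (S T : Submonoid R)
    (hOreS : ∀ (r : R), ∀ s ∈ S, ∃ s' ∈ S, ∃ r' : R, s' * r = r' * s)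
    (hOreT : ∀ (r : R), ∀ s ∈ T, ∃ s' ∈ T, ∃ r' : R, s' * r = r' * s)
    (hdenS : ∀ (r : R), ∀ s ∈ S, r * s = 0 → ∃ t ∈ S, t * r = 0)
    (hdenT : ∀ (r : R), ∀ s ∈ T, r * s = 0 → ∃ t ∈ T, t * r = 0) :
    (∀ (r : R), ∀ s ∈ (S ⊔ T : Submonoid R),
      ∃ s' ∈ (S ⊔ T : Submonoid R), ∃ r' : R, s' * r = r' * s) ∧
    (∀ (r : R), ∀ s ∈ (S ⊔ T : Submonoid R), r * s = 0 →
      ∃ t ∈ (S ⊔ T : Submonoid R), t * r = 0) := by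
  have hOre : S ⊔ T ≤ (S ⊔ T).leftOreSubmonoid :=
    Submonoid.sup_le_leftOreSubmonoid (fun s hs r => hOreS r s hs) (fun s hs r => hOreT r s hs)
  have hden : S ⊔ T ≤ (S ⊔ T).leftReversibleSubmonoid :=
    Submonoid.sup_le_leftReversibleSubmonoid (fun s hs r => hdenS r s hs)
      (fun s hs r => hdenT r s hs)
  exact ⟨fun r s hs => hOre hs r, fun r s hs => hden hs r⟩

/-- Let `R` be a ring and `S, T` left denominator sets of `R`. If the
multiplicative submonoid `ST` generated by `S` and `T` does not contain `0`, then `ST`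
is a left denominator set of `R`. -/
theorem stmt12 {R : Type*} [Ring R] (S T : Submonoid R)
    (h0S : (0 : R) ∉ S) (h0T : (0 : R) ∉ T)
    (hOreS : ∀ (r : R), ∀ s ∈ S, ∃ s' ∈ S, ∃ r' : R, s' * r = r' * s)
    (hOreT : ∀ (r : R), ∀ s ∈ T, ∃ s' ∈ T, ∃ r' : R, s' * r = r' * s)
    (hdenS : ∀ (r : R), ∀ s ∈ S, r * s = 0 → ∃ t ∈ S, t * r = 0)
    (hdenT : ∀ (r : R), ∀ s ∈ T, r * s = 0 → ∃ t ∈ T, t * r = 0)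
    (h0 : (0 : R) ∉ (S ⊔ T : Submonoid R)) :
    (∀ (r : R), ∀ s ∈ (S ⊔ T : Submonoid R),
      ∃ s' ∈ (S ⊔ T : Submonoid R), ∃ r' : R, s' * r = r' * s) ∧
    (∀ (r : R), ∀ s ∈ (S ⊔ T : Submonoid R), r * s = 0 →
      ∃ t ∈ (S ⊔ T : Submonoid R), t * r = 0) :=
  stmt12_general S T hOreS hOreT hdenS hdenT
end

section
/- Let G be a monoid with identity e, A = ⊕_{g∈G} A_g a G-graded ring with 1 ∈ A_e, and S a left denominator set of A with S ⊆ A_e. Then the kernel ideal ass(S) = {a ∈ A | sa = 0 for some s ∈ S} is a G-graded (homogeneous) ideal of A. -/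
theorem stmt13_general {ι A : Type*} [AddMonoid ι] [DecidableEq ι] [Ring A]
    (𝒜 : ι → AddSubgroup A) [GradedRing 𝒜] (S : Submonoid A)
    (hS0 : ∀ s ∈ S, s ∈ 𝒜 0) :
    ∀ a : A, (∃ s ∈ S, s * a = 0) →
      ∀ i : ι, ∃ s ∈ S, s * (DirectSum.decompose 𝒜 a i : A) = 0 := by
  rintro a ⟨s, hsS, hsa⟩ i
  refine ⟨s, hsS, ?_⟩
  rw [← DirectSum.coe_decompose_mul_of_left_mem_zero 𝒜 (hS0 s hsS), hsa,
    DirectSum.decompose_zero, DirectSum.zero_apply, ZeroMemClass.coe_zero]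

/-- Let `G` be a monoid (written additively, with identity `0`),
`A = ⊕_{g ∈ G} A_g` a `G`-graded ring with `1 ∈ A_0`, and `S` a left denominator set of
`A` with `S ⊆ A_0`. Then the kernel ideal `ass(S) = {a ∈ A | s * a = 0 for some s ∈ S}`
is a `G`-graded (homogeneous) ideal of `A`: together with any element it contains all
its homogeneous components. -/
theorem stmt13 {ι A : Type*} [AddMonoid ι] [DecidableEq ι] [Ring A]
    (𝒜 : ι → AddSubgroup A) [GradedRing 𝒜] (S : Submonoid A)
    (hS0 : ∀ s ∈ S, s ∈ 𝒜 0)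
    (hOre : ∀ (r : A), ∀ s ∈ S, ∃ s' ∈ S, ∃ r' : A, s' * r = r' * s)
    (hden : ∀ (r : A), ∀ s ∈ S, r * s = 0 → ∃ t ∈ S, t * r = 0) :
    ∀ a : A, (∃ s ∈ S, s * a = 0) →
      ∀ i : ι, ∃ s ∈ S, s * (DirectSum.decompose 𝒜 a i : A) = 0 :=
  stmt13_general 𝒜 S hS0
end

section
/- Let R be a ring, S a left denominator set of R, and suppose: (i) the localization S^{-1}R is left Noetherian, and (ii) for every left ideal I of R, the S-torsion submodule of R/I is a Noetherian left R-module. Then R is left Noetherian. -/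
/-!
Extend a left ideal `I` of `R` to `S⁻¹R`; by Noetherianity the extension is generated by
the images of finitely many elements of `I`, spanning a finitely generated `I₀ ≤ I`. By the
left Ore condition every element of the extension of `I₀` is a left fraction `s⁻¹r` with
`r ∈ I₀`, so every `x ∈ I` satisfies `s * x ∈ I₀` for some `s ∈ S`. Hence `I / I₀` is an
`S`-torsion submodule of `R / I₀`, finitely generated by (ii), and `I` is finitely generated.
-/

section OreExtension

variable {R Q : Type*} [Ring R] [Ring Q] (S : Submonoid R) (φ : R →+* Q)

/-- The left ideal `S⁻¹I` of the localization: left fractions `s⁻¹r` with numerator in `I`. -/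
def oreExtension (hOre : ∀ (r : R), ∀ s ∈ S, ∃ s' ∈ S, ∃ r' : R, s' * r = r' * s)
    (hfrac : ∀ q : Q, ∃ s ∈ S, ∃ r : R, φ s * q = φ r) (I : Ideal R) : Ideal Q where
  carrier := {q | ∃ s ∈ S, ∃ r ∈ I, φ s * q = φ r}
  zero_mem' := ⟨1, S.one_mem, 0, I.zero_mem, by simp⟩
  add_mem' := by
    rintro q₁ q₂ ⟨s₁, hs₁, r₁, hr₁, h₁⟩ ⟨s₂, hs₂, r₂, hr₂, h₂⟩
    obtain ⟨u, hu, v, huv⟩ := hOre s₂ s₁ hs₁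
    refine ⟨u * s₂, S.mul_mem hu hs₂, v * r₁ + u * r₂,
      I.add_mem (I.mul_mem_left v hr₁) (I.mul_mem_left u hr₂), ?_⟩
    calc φ (u * s₂) * (q₁ + q₂) = φ (v * s₁) * q₁ + φ u * (φ s₂ * q₂) := by
          simp only [← huv, mul_add, map_mul, mul_assoc]
      _ = φ (v * r₁ + u * r₂) := by
          rw [map_mul, mul_assoc, h₁, h₂, map_add, map_mul, map_mul]
  smul_mem' := by
    rintro q y ⟨s, hs, r, hr, h⟩
    obtain ⟨t, ht, a, hta⟩ := hfrac q
    obtain ⟨u, hu, v, huv⟩ := hOre a s hs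
    refine ⟨u * t, S.mul_mem hu ht, v * r, I.mul_mem_left v hr, ?_⟩
    calc φ (u * t) * (q * y) = φ (u * a) * y := by
          rw [map_mul, map_mul, mul_assoc, ← mul_assoc (φ t), hta, mul_assoc]
      _ = φ (v * r) := by rw [huv, map_mul, mul_assoc, h, map_mul]

theorem map_le_oreExtension (hOre : ∀ (r : R), ∀ s ∈ S, ∃ s' ∈ S, ∃ r' : R, s' * r = r' * s)
    (hfrac : ∀ q : Q, ∃ s ∈ S, ∃ r : R, φ s * q = φ r) (I : Ideal R) :
    I.map φ ≤ oreExtension S φ hOre hfrac I :=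
  Ideal.span_le.2 <| by
    rintro _ ⟨r, hr, rfl⟩
    exact ⟨1, S.one_mem, r, hr, by rw [map_one, one_mul]⟩

theorem exists_mul_mem_of_map_mem_map
    (hOre : ∀ (r : R), ∀ s ∈ S, ∃ s' ∈ S, ∃ r' : R, s' * r = r' * s)
    (hker : ∀ r : R, φ r = 0 ↔ ∃ s ∈ S, s * r = 0)
    (hfrac : ∀ q : Q, ∃ s ∈ S, ∃ r : R, φ s * q = φ r) {I : Ideal R} {x : R}
    (hx : φ x ∈ I.map φ) : ∃ s ∈ S, s * x ∈ I := by
  obtain ⟨s, hs, r, hr, h⟩ := map_le_oreExtension S φ hOre hfrac I hx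
  obtain ⟨t, ht, htr⟩ := (hker (s * x - r)).1 (by rw [map_sub, map_mul, h, sub_self])
  refine ⟨t * s, S.mul_mem ht hs, ?_⟩
  rw [mul_sub, sub_eq_zero] at htr
  rw [mul_assoc, htr]
  exact I.mul_mem_left t hr

end OreExtension

theorem Ideal.exists_fg_le_map_eq {R Q : Type*} [Ring R] [Ring Q] [IsNoetherianRing Q]
    (φ : R →+* Q) (I : Ideal R) : ∃ I₀ ≤ I, I₀.FG ∧ I₀.map φ = I.map φ := by
  obtain ⟨T, hTI, hT⟩ := (Submodule.fg_span_iff_fg_span_finset_subset (φ '' I)).1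
    (IsNoetherian.noetherian (I.map φ))
  obtain ⟨t, htI, ht, hspan⟩ := Set.exists_subset_image_finite_and
    (p := fun t => Submodule.span Q t = I.map φ) |>.1 ⟨T, hTI, T.finite_toSet, hT.symm⟩
  exact ⟨Ideal.span t, Ideal.span_le.2 htI, Submodule.fg_span ht,
    by rw [Ideal.map_span]; exact hspan⟩

theorem stmt14_general {R Q' : Type*} [Ring R] [Ring Q'] (S : Submonoid R)
    (hOre : ∀ (r : R), ∀ s ∈ S, ∃ s' ∈ S, ∃ r' : R, s' * r = r' * s)
    (φ : R →+* Q')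
    (hker : ∀ r : R, φ r = 0 ↔ ∃ s ∈ S, s * r = 0)
    (hfrac : ∀ q : Q', ∃ s ∈ S, ∃ r : R, φ s * q = φ r)
    [IsNoetherianRing Q']
    (htor : ∀ (I : Ideal R) (N : Submodule R (R ⧸ I)),
      (∀ m ∈ N, ∃ s ∈ S, s • m = 0) → N.FG) :
    IsNoetherianRing R := by
  refine (isNoetherianRing_iff_ideal_fg R).2 fun I => ?_
  obtain ⟨I₀, hle, hfg, hmap⟩ := Ideal.exists_fg_le_map_eq φ I
  have htorsion : ∀ m ∈ Submodule.map I₀.mkQ I, ∃ s ∈ S, s • m = 0 := by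
    rintro _ ⟨x, hx, rfl⟩
    obtain ⟨s, hs, hsx⟩ := exists_mul_mem_of_map_mem_map S φ hOre hker hfrac
      (hmap ▸ Ideal.mem_map_of_mem φ hx)
    exact ⟨s, hs, by rwa [← map_smul, Submodule.mkQ_apply, Submodule.Quotient.mk_eq_zero]⟩
  refine Submodule.fg_of_fg_map_of_fg_inf_ker I₀.mkQ (htor I₀ _ htorsion) ?_
  rwa [Submodule.ker_mkQ, inf_eq_right.2 hle]

/-- Let `R` be a ring, `S` a left denominator set of `R`, and suppose:
(i) the localization `S⁻¹R` (modelled by a ring `Q'` and a homomorphism `φ : R → Q'`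
sending `S` to units, with kernel the `S`-torsion of `R` and with every element of `Q'`
a left fraction) is left Noetherian, and (ii) for every left ideal `I` of `R` the
`S`-torsion submodule of `R/I` is a Noetherian left `R`-module (equivalently, every
submodule of `R/I` consisting of `S`-torsion elements is finitely generated). Then `R`
is left Noetherian. -/
theorem stmt14 {R Q' : Type*} [Ring R] [Ring Q'] (S : Submonoid R)
    (h0 : (0 : R) ∉ S)
    (hOre : ∀ (r : R), ∀ s ∈ S, ∃ s' ∈ S, ∃ r' : R, s' * r = r' * s)
    (hden : ∀ (r : R), ∀ s ∈ S, r * s = 0 → ∃ t ∈ S, t * r = 0)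
    (φ : R →+* Q')
    (hker : ∀ r : R, φ r = 0 ↔ ∃ s ∈ S, s * r = 0)
    (hunit : ∀ s ∈ S, IsUnit (φ s))
    (hfrac : ∀ q : Q', ∃ s ∈ S, ∃ r : R, φ s * q = φ r)
    [IsNoetherianRing Q']
    (htor : ∀ (I : Ideal R) (N : Submodule R (R ⧸ I)),
      (∀ m ∈ N, ∃ s ∈ S, s • m = 0) → N.FG) :
    IsNoetherianRing R :=
  stmt14_general S hOre φ hker hfrac htor
end

section
/- Let R be a ring, S a left denominator set, and M a left R-module such that the set of kernels {ker(s_M) | s ∈ S} (where s_M is left multiplication by s on M) has a maximal element. Then every maximal element of this set equals the S-torsion submodule tor_S(M); in particular there exists s ∈ S with s·tor_S(M) = 0. -/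
/-!
If `t • m = 0`, the left Ore condition gives `s' * s = r' * t` with `s' ∈ S`, so `m` is killed by
`s' * s`. Since `ker (s' * s) ⊇ ker s`, maximality of `ker s` forces `s • m = 0`.
-/

section OreKernel

variable {R M : Type*} [Monoid R] [AddMonoid M] [DistribMulAction R M]

theorem setOf_smul_eq_zero_subset_mul (s t : R) :
    {m : M | s • m = 0} ⊆ {m : M | (t * s) • m = 0} :=
  fun m (hm : s • m = 0) => show (t * s) • m = 0 by rw [mul_smul, hm, smul_zero]

theorem setOf_smul_eq_zero_eq_torsion_of_maximal (S : Submonoid R)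
    (hOre : ∀ (r : R), ∀ s ∈ S, ∃ s' ∈ S, ∃ r' : R, s' * r = r' * s) {s : R} (hs : s ∈ S)
    (hsmax : ∀ t ∈ S,
      {m : M | s • m = 0} ⊆ {m : M | t • m = 0} → {m : M | t • m = 0} = {m : M | s • m = 0}) :
    {m : M | s • m = 0} = {m : M | ∃ t ∈ S, t • m = 0} := by
  refine Set.Subset.antisymm (fun m hm => ⟨s, hs, hm⟩) ?_
  rintro m ⟨t, ht, htm⟩
  obtain ⟨s', hs', r', hcomm⟩ := hOre s t ht
  have hkill : m ∈ {m : M | (s' * s) • m = 0} :=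
    show (s' * s) • m = 0 by rw [hcomm, mul_smul, htm, smul_zero]
  rwa [hsmax (s' * s) (S.mul_mem hs' hs) (setOf_smul_eq_zero_subset_mul s s')] at hkill

end OreKernel

theorem stmt15_general {R M : Type*} [Ring R] [AddCommGroup M] [Module R M] (S : Submonoid R)
    (hOre : ∀ (r : R), ∀ s ∈ S, ∃ s' ∈ S, ∃ r' : R, s' * r = r' * s)
    (hmax : ∃ s ∈ S, ∀ t ∈ S,
      {m : M | s • m = 0} ⊆ {m : M | t • m = 0} → {m : M | t • m = 0} = {m : M | s • m = 0}) :
    (∀ s ∈ S, (∀ t ∈ S,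
        {m : M | s • m = 0} ⊆ {m : M | t • m = 0} → {m : M | t • m = 0} = {m : M | s • m = 0}) →
      {m : M | s • m = 0} = {m : M | ∃ t ∈ S, t • m = 0}) ∧
    ∃ s ∈ S, ∀ m : M, (∃ t ∈ S, t • m = 0) → s • m = 0 := by
  have key := fun s (hs : s ∈ S) => setOf_smul_eq_zero_eq_torsion_of_maximal (M := M) S hOre hs
  refine ⟨key, ?_⟩
  obtain ⟨s, hs, hsmax⟩ := hmax
  exact ⟨s, hs, fun m hm => (key s hs hsmax).superset hm⟩

/-- Let `R` be a ring, `S` a left denominator set of `R`, and `M` a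
left `R`-module such that the set of kernels `{ker (s_M) | s ∈ S}` (where `s_M` is left
multiplication by `s` on `M`) has a maximal element. Then every maximal element of this
set equals the `S`-torsion submodule `tor_S(M)`; in particular there exists `s ∈ S`
with `s • tor_S(M) = 0`. -/
theorem stmt15 {R M : Type*} [Ring R] [AddCommGroup M] [Module R M] (S : Submonoid R)
    (h0 : (0 : R) ∉ S)
    (hOre : ∀ (r : R), ∀ s ∈ S, ∃ s' ∈ S, ∃ r' : R, s' * r = r' * s)
    (hden : ∀ (r : R), ∀ s ∈ S, r * s = 0 → ∃ t ∈ S, t * r = 0)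
    (hmax : ∃ s ∈ S, ∀ t ∈ S,
      {m : M | s • m = 0} ⊆ {m : M | t • m = 0} → {m : M | t • m = 0} = {m : M | s • m = 0}) :
    (∀ s ∈ S, (∀ t ∈ S,
        {m : M | s • m = 0} ⊆ {m : M | t • m = 0} → {m : M | t • m = 0} = {m : M | s • m = 0}) →
      {m : M | s • m = 0} = {m : M | ∃ t ∈ S, t • m = 0}) ∧
    ∃ s ∈ S, ∀ m : M, (∃ t ∈ S, t • m = 0) → s • m = 0 :=
  stmt15_general S hOre hmax
end

section
/- Let R be a ring, S a left denominator set of R, and I an ideal of R with I ∩ S = ∅ such that S^{-1}I is a (two-sided) ideal of S^{-1}R. Then the image S̄ of S in R/I is a left denominator set of R/I. -/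
/-!
The Ore condition is inherited by any homomorphic image. For the reversibility condition,
let `r s ∈ I` with `s ∈ S`. In `S⁻¹R` the element `φ (r s)` lies in `S⁻¹I`, and since `S⁻¹I` is a
right ideal so does `φ r = φ (r s) (φ s)⁻¹`, say `φ s₁ φ r = φ a₁` with `a₁ ∈ I`. The kernel of
`φ` is killed from the left by `S`, so `t s₁ r = t a₁ ∈ I` for some `t ∈ S`.
-/

theorem Submonoid.exists_map_mul_eq_mul_map_of_surjective {R R' F : Type*} [Monoid R] [Monoid R']
    [FunLike F R R'] [MulHomClass F R R'] (S : Submonoid R)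
    (hOre : ∀ (r : R), ∀ s ∈ S, ∃ s' ∈ S, ∃ r' : R, s' * r = r' * s)
    (f : F) (hf : Function.Surjective f) :
    ∀ (x : R'), ∀ s ∈ S, ∃ s' ∈ S, ∃ x' : R', f s' * x = x' * f s := by
  intro x s hs
  obtain ⟨r, rfl⟩ := hf x
  obtain ⟨s', hs', r', h⟩ := hOre r s hs
  exact ⟨s', hs', f r', by rw [← map_mul, h, map_mul]⟩

section LeftFractions

variable {R Q : Type*} [Ring R] [Ring Q] (S : Submonoid R) (I : Ideal R) (φ : R →+* Q)

theorem exists_map_mul_eq_map_of_mul_mem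
    (hunit : ∀ s ∈ S, IsUnit (φ s))
    (hSI : ∀ q : Q, (∃ s ∈ S, ∃ a ∈ I, φ s * q = φ a) →
      ∀ p : Q, ∃ s ∈ S, ∃ a ∈ I, φ s * (q * p) = φ a)
    {r s : R} (hs : s ∈ S) (hrs : r * s ∈ I) :
    ∃ s₁ ∈ S, ∃ a₁ ∈ I, φ s₁ * φ r = φ a₁ := by
  obtain ⟨u, hu⟩ := hunit s hs
  have hφr : φ (r * s) * ↑u⁻¹ = φ r := by
    rw [map_mul, ← hu, mul_assoc, Units.mul_inv, mul_one]
  simpa only [hφr] using hSI (φ (r * s)) ⟨1, S.one_mem, r * s, hrs, by rw [map_one, one_mul]⟩ ↑u⁻¹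

theorem exists_mul_mem_of_map_mul_eq_map
    (hker : ∀ r : R, φ r = 0 → ∃ s ∈ S, s * r = 0)
    {r : R} (h : ∃ s₁ ∈ S, ∃ a₁ ∈ I, φ s₁ * φ r = φ a₁) :
    ∃ t ∈ S, t * r ∈ I := by
  obtain ⟨s₁, hs₁, a₁, ha₁, heq⟩ := h
  obtain ⟨t, ht, htz⟩ := hker (s₁ * r - a₁) (by rw [map_sub, map_mul, heq, sub_self])
  have htr : t * s₁ * r = t * a₁ := by
    rw [mul_assoc, ← sub_eq_zero, ← mul_sub]
    exact htz
  exact ⟨t * s₁, S.mul_mem ht hs₁, htr ▸ I.mul_mem_left t ha₁⟩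

end LeftFractions

theorem stmt17_general {R Q' Rbar : Type*} [Ring R] [Ring Q'] [Ring Rbar] (S : Submonoid R)
    (hOre : ∀ (r : R), ∀ s ∈ S, ∃ s' ∈ S, ∃ r' : R, s' * r = r' * s)
    (I : Ideal R)
    (φ : R →+* Q')
    (hker : ∀ r : R, φ r = 0 ↔ ∃ s ∈ S, s * r = 0)
    (hunit : ∀ s ∈ S, IsUnit (φ s))
    (hSI : ∀ q : Q', (∃ s ∈ S, ∃ a ∈ I, φ s * q = φ a) →
      ∀ p : Q', ∃ s ∈ S, ∃ a ∈ I, φ s * (q * p) = φ a)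
    (ψ : R →+* Rbar) (hψsurj : Function.Surjective ψ)
    (hψker : ∀ r : R, ψ r = 0 ↔ r ∈ I) :
    (∀ (rb : Rbar), ∀ s ∈ S, ∃ s' ∈ S, ∃ r' : Rbar, ψ s' * rb = r' * ψ s) ∧
    (∀ (rb : Rbar), ∀ s ∈ S, rb * ψ s = 0 → ∃ t ∈ S, ψ t * rb = 0) := by
  refine ⟨S.exists_map_mul_eq_mul_map_of_surjective hOre ψ hψsurj, ?_⟩
  intro rb s hs hzero
  obtain ⟨r, rfl⟩ := hψsurj rb
  have hrs : r * s ∈ I := (hψker _).mp (by rwa [map_mul])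
  obtain ⟨t, ht, htr⟩ := exists_mul_mem_of_map_mul_eq_map S I φ (fun r => (hker r).mp)
    (exists_map_mul_eq_map_of_mul_mem S I φ hunit hSI hs hrs)
  exact ⟨t, ht, by rw [← map_mul, hψker]; exact htr⟩

/-- Let `R` be a ring, `S` a left denominator set of `R`, and `I` a
two-sided ideal of `R` with `I ∩ S = ∅` such that `S⁻¹I` is a (two-sided) ideal of
`S⁻¹R`. Then the image `S̄` of `S` in `R/I` (modelled by a surjective ring homomorphism
`ψ : R → R̄` with kernel `I`) is a left denominator set of `R/I`. Here the localization
`S⁻¹R` is modelled by a ring `Q'` and a homomorphism `φ : R → Q'`, and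
`S⁻¹I = {(φ s)⁻¹ (φ a) | s ∈ S, a ∈ I}` is assumed to be closed under right
multiplication by elements of `Q'` (it is automatically a left ideal). -/
theorem stmt17 {R Q' Rbar : Type*} [Ring R] [Ring Q'] [Ring Rbar] (S : Submonoid R)
    (h0 : (0 : R) ∉ S)
    (hOre : ∀ (r : R), ∀ s ∈ S, ∃ s' ∈ S, ∃ r' : R, s' * r = r' * s)
    (hden : ∀ (r : R), ∀ s ∈ S, r * s = 0 → ∃ t ∈ S, t * r = 0)
    (I : Ideal R) (hItwo : ∀ a ∈ I, ∀ r : R, a * r ∈ I)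
    (hdisj : ∀ s ∈ S, s ∉ I)
    (φ : R →+* Q')
    (hker : ∀ r : R, φ r = 0 ↔ ∃ s ∈ S, s * r = 0)
    (hunit : ∀ s ∈ S, IsUnit (φ s))
    (hfrac : ∀ q : Q', ∃ s ∈ S, ∃ r : R, φ s * q = φ r)
    (hSI : ∀ q : Q', (∃ s ∈ S, ∃ a ∈ I, φ s * q = φ a) →
      ∀ p : Q', ∃ s ∈ S, ∃ a ∈ I, φ s * (q * p) = φ a)
    (ψ : R →+* Rbar) (hψsurj : Function.Surjective ψ)
    (hψker : ∀ r : R, ψ r = 0 ↔ r ∈ I) :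
    (∀ (rb : Rbar), ∀ s ∈ S, ∃ s' ∈ S, ∃ r' : Rbar, ψ s' * rb = r' * ψ s) ∧
    (∀ (rb : Rbar), ∀ s ∈ S, rb * ψ s = 0 → ∃ t ∈ S, ψ t * rb = 0) :=
  stmt17_general S hOre I φ hker hunit hSI ψ hψsurj hψker
end

section
/- Let R be a semiprime ring. Then the classical left quotient ring Q(R) = C^{-1}R exists and is left Noetherian if and only if R is a semiprime left Goldie ring, in which case Q(R) is semisimple (Artinian). -/
/-!
Write `ℓ(a)` for the left annihilator of `a`. In a semiprime ring with ACC on left annihilators,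
choosing elements whose left annihilator is maximal in a given family shows that an element with
essential left annihilator is zero, that no right ideal `aR ≠ 0` is nil, and hence that every
nonzero left ideal contains some `a ≠ 0` with `ℓ(a²) = ℓ(a)`. Finite uniform dimension then gives
two facts: `Rc` is essential for `c` right regular, since otherwise `L, Lc, Lc², …` would be
independent; and every essential left ideal `E` contains a regular element, since otherwise adding
to `c ∈ E` an element `x ∈ E ∩ ℓ(c)` with `ℓ(x²) = ℓ(x)` could be repeated forever and the chosen
elements would span an independent family. This yields the Ore condition, and a complement of a
left ideal `𝔄` of `Q` is the extension of a complement `I'` of `𝔄 ∩ R` with `(𝔄 ∩ R) ⊕ I'`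
essential. Conversely, extending left ideals from `R` to `Q` preserves independence and is
injective on left annihilators, so both Goldie conditions descend from a Noetherian `Q` to `R`.
-/

universe u

namespace Goldie

open Submodule

section Lattice

variable {α : Type*} [CompleteLattice α]

def IsEssential (a : α) : Prop := ∀ b, Disjoint a b → b = ⊥

theorem IsEssential.mono {a b : α} (ha : IsEssential a) (hab : a ≤ b) : IsEssential b :=
  fun c hc => ha c (hc.mono_left hab)

variable [IsModularLattice α] [IsCompactlyGenerated α]

theorem exists_disjoint_isEssential_sup (a : α) : ∃ b, Disjoint a b ∧ IsEssential (a ⊔ b) := by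
  obtain ⟨b, -, hb⟩ := zorn_le_nonempty₀ {b | Disjoint a b}
    (fun c hcs hc _ _ => ⟨sSup c, hc.directedOn.disjoint_sSup_right.2 fun _ hz => hcs hz,
      fun _ hz => le_sSup hz⟩) ⊥ disjoint_bot_right
  refine ⟨b, hb.prop, fun c hc => hc.eq_bot_of_ge ?_⟩
  have hbc : b = b ⊔ c :=
    hb.eq_of_le (hb.prop.disjoint_sup_right_of_disjoint_sup_left hc) le_sup_left
  exact (le_sup_right.trans hbc.symm.le).trans le_sup_right

theorem iSupIndep_of_disjoint_iSup_gt {t : ℕ → α} (h : ∀ n, Disjoint (t n) (⨆ m > n, t m)) :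
    iSupIndep t := by
  classical
  refine iSupIndep_iff_supIndep.2 fun s => ?_
  induction s using Finset.induction_on_min with
  | empty => exact Finset.supIndep_empty _
  | insert n s hn ih =>
    exact ih.insert ((h n).mono_right (Finset.sup_le fun m hm => le_iSup₂_of_le m (hn m hm) le_rfl))

end Lattice

section Module

variable {R M N : Type*} [Ring R] [AddCommGroup M] [Module R M] [AddCommGroup N] [Module R N]

theorem IsEssential.exists_smul_mem_ne_zero {E : Submodule R M} (hE : IsEssential E) {x : M}
    (hx : x ≠ 0) : ∃ r : R, r • x ∈ E ∧ r • x ≠ 0 := by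
  by_contra! h
  refine hx ((span_singleton_eq_bot).1 (hE _ (disjoint_def.2 fun y hyE hy => ?_)))
  obtain ⟨r, rfl⟩ := mem_span_singleton.1 hy
  exact h r hyE

theorem IsEssential.comap {E : Submodule R N} (hE : IsEssential E) (f : M →ₗ[R] N) :
    IsEssential (E.comap f) := by
  intro L hL
  refine (Submodule.eq_bot_iff L).2 fun y hy => by_contra fun hy0 => ?_
  have hL' : ∀ z ∈ L, f z ∈ E → z = 0 := fun z hz hzE => disjoint_def.1 hL z hzE hz
  by_cases hfy : f y = 0
  · exact hy0 (hL' y hy (hfy ▸ E.zero_mem))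
  · obtain ⟨r, hrE, hr0⟩ := hE.exists_smul_mem_ne_zero hfy
    refine hr0 ?_
    rw [← map_smul, hL' (r • y) (L.smul_mem r hy) (by rwa [map_smul]), map_zero]

end Module

section Ring

variable {R : Type*} [Ring R]

def leftAnn (X : Set R) : Ideal R where
  carrier := {q | ∀ a ∈ X, q * a = 0}
  add_mem' hx hy a ha := by rw [add_mul, hx a ha, hy a ha, add_zero]
  zero_mem' a _ := zero_mul a
  smul_mem' r q hq a ha := by rw [smul_eq_mul, mul_assoc, hq a ha, mul_zero]

@[simp]
theorem mem_leftAnn_singleton {a q : R} : q ∈ leftAnn {a} ↔ q * a = 0 := by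
  simp [leftAnn]

theorem leftAnn_singleton_mul (v a : R) :
    leftAnn {v * a} = Submodule.comap (LinearMap.toSpanSingleton R R v) (leftAnn {a}) := by
  ext q
  simp [mul_assoc]

theorem leftAnn_le_leftAnn_mul (a v : R) : leftAnn {a} ≤ leftAnn {a * v} := fun q hq => by
  rw [mem_leftAnn_singleton] at hq ⊢
  rw [← mul_assoc, hq, zero_mul]

variable (R) in
def IsSemiprimeRing : Prop := ∀ a : R, (∀ x : R, a * x * a = 0) → a = 0

variable (R) in
def HasAccLeftAnn : Prop :=
  ∀ f : ℕ → Set R, (∀ n : ℕ, ∃ X : Set R, f n = {q : R | ∀ a ∈ X, q * a = 0}) →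
    Monotone f → ∃ n : ℕ, ∀ m : ℕ, n ≤ m → f m = f n

variable (R) in
def HasFiniteUniformDimension : Prop := ¬ ∃ g : ℕ → Ideal R, (∀ n, g n ≠ ⊥) ∧ iSupIndep g

variable (R) in
def IsLeftGoldie : Prop := HasAccLeftAnn R ∧ HasFiniteUniformDimension R

variable (R) in
def IsLeftOre : Prop := ∀ r c : R, IsRegular c → ∃ c' r' : R, IsRegular c' ∧ c' * r = r' * c

theorem HasAccLeftAnn.exists_maximal (h : HasAccLeftAnn R) {T : Set R} (hT : T.Nonempty) :
    ∃ a ∈ T, ∀ b ∈ T, leftAnn {a} ≤ leftAnn {b} → leftAnn {b} = leftAnn {a} := by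
  have hwf : WellFoundedGT {I : Ideal R // ∃ X, I = leftAnn X} := by
    refine wellFoundedGT_iff_monotone_chain_condition.2 fun f => ?_
    obtain ⟨n, hn⟩ := h (fun n => (f n : Ideal R))
      (fun n => ⟨_, congrArg SetLike.coe (f n).2.choose_spec⟩)
      (fun m n hmn => SetLike.coe_subset_coe.2 (f.mono hmn))
    exact ⟨n, fun m hm => Subtype.ext (SetLike.coe_injective (hn m hm).symm)⟩
  obtain ⟨_, ⟨a, haT, rfl⟩, hmax⟩ :=
    hwf.wf.has_min ((fun a => ⟨leftAnn {a}, _, rfl⟩) '' T) (hT.image _)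
  exact ⟨a, haT, fun b hb hab => (eq_of_le_of_not_lt hab (hmax _ ⟨b, hb, rfl⟩)).symm⟩

theorem HasAccLeftAnn.exists_pow_leftAnn (h : HasAccLeftAnn R) (b : R) :
    ∃ n, 0 < n ∧ leftAnn {b ^ n * b ^ n} ≤ leftAnn {b ^ n} := by
  obtain ⟨_, ⟨k, rfl⟩, hmax⟩ := h.exists_maximal (Set.range_nonempty fun k : ℕ => b ^ (k + 1))
  have hsq : b ^ (2 * k + 1 + 1) = b ^ (k + 1) * b ^ (k + 1) := by
    rw [← pow_add]; congr 1; omega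
  exact ⟨k + 1, k.succ_pos, (hmax _ ⟨2 * k + 1, hsq⟩ (leftAnn_le_leftAnn_mul _ _)).le⟩

theorem exists_pow_ne_zero_mul_eq_zero {M₀ : Type*} [MonoidWithZero M₀] {u : M₀}
    (hu : IsNilpotent u) (hu0 : u ≠ 0) : ∃ k, u ^ (k + 1) ≠ 0 ∧ u * u ^ (k + 1) = 0 := by
  have : Nontrivial M₀ := nontrivial_of_ne u 0 hu0
  have hpos := pos_nilpotencyClass_iff.2 hu
  have hne1 := (nilpotencyClass_eq_one (x := u)).not.2 hu0
  obtain ⟨hk, hk0⟩ := nilpotencyClass_eq_succ_iff.1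
    (show nilpotencyClass u = nilpotencyClass u - 2 + 1 + 1 by omega)
  exact ⟨_, hk0, by rwa [← pow_succ']⟩

theorem eq_zero_of_isEssential_leftAnn (hsp : IsSemiprimeRing R) (hacc : HasAccLeftAnn R) {z : R}
    (hz : IsEssential (leftAnn {z})) : z = 0 := by
  by_contra hz0
  obtain ⟨a, ⟨ha0, haE⟩, hmax⟩ :=
    hacc.exists_maximal (T := {a | a ≠ 0 ∧ IsEssential (leftAnn {a})}) ⟨z, hz0, hz⟩
  have hess : ∀ v, IsEssential (leftAnn {v * a}) := fun v => by
    rw [leftAnn_singleton_mul]; exact haE.comap _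
  refine ha0 (hsp a fun x => by_contra fun hxa => ?_)
  have heq : leftAnn {a * x * a} = leftAnn {a} :=
    hmax _ ⟨hxa, hess _⟩ (by simpa only [mul_assoc] using leftAnn_le_leftAnn_mul a (x * a))
  obtain ⟨r, hr, hr0⟩ := (hess x).exists_smul_mem_ne_zero ha0
  have hra : r ∈ leftAnn {a * x * a} := by simpa [mul_assoc] using hr
  rw [heq, mem_leftAnn_singleton] at hra
  exact hr0 hra

theorem eq_zero_of_forall_isNilpotent_mul (hsp : IsSemiprimeRing R) (hacc : HasAccLeftAnn R)
    {a : R} (h : ∀ x, IsNilpotent (a * x)) : a = 0 := by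
  by_contra ha0
  obtain ⟨m, ⟨hm0, y, hy⟩, hmax⟩ :=
    hacc.exists_maximal (T := {m | m ≠ 0 ∧ ∃ y, m = a * y}) ⟨a, ha0, 1, (mul_one a).symm⟩
  refine hm0 (hsp m fun x => ?_)
  by_cases hx : m * x = 0
  · rw [hx, zero_mul]
  obtain ⟨k, hk0, hk⟩ :=
    exists_pow_ne_zero_mul_eq_zero (by simpa only [hy, mul_assoc] using h (y * x)) hx
  -- `(m x)^(k+1) ∈ mR` is nonzero and killed by `m x`; by maximality of `ℓ(m)`, so is `m`
  have hb : (m * x) ^ (k + 1) = m * (x * (m * x) ^ k) := by rw [pow_succ', mul_assoc]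
  have heq := hmax _ ⟨hk0, y * (x * (m * x) ^ k), by rw [hb, hy, mul_assoc]⟩
    (by rw [hb]; exact leftAnn_le_leftAnn_mul _ _)
  have hmx : m * x ∈ leftAnn {(m * x) ^ (k + 1)} := mem_leftAnn_singleton.2 hk
  rwa [heq, mem_leftAnn_singleton] at hmx

theorem exists_mem_not_isNilpotent (hsp : IsSemiprimeRing R) (hacc : HasAccLeftAnn R)
    {J : Ideal R} (hJ : J ≠ ⊥) : ∃ b ∈ J, ¬IsNilpotent b := by
  obtain ⟨u, hu, hu0⟩ := Submodule.exists_mem_ne_zero_of_ne_bot hJ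
  obtain ⟨x, hx⟩ : ∃ x, ¬IsNilpotent (u * x) := by
    by_contra! h
    exact hu0 (eq_zero_of_forall_isNilpotent_mul hsp hacc h)
  refine ⟨x * u, J.smul_mem x hu, fun ⟨n, hn⟩ => hx ⟨n + 1, ?_⟩⟩
  rw [pow_succ, ← mul_assoc, mul_pow_mul, hn, mul_zero, zero_mul]

theorem exists_mem_leftAnn_mul_self_le (hsp : IsSemiprimeRing R) (hacc : HasAccLeftAnn R)
    {J : Ideal R} (hJ : J ≠ ⊥) : ∃ a ∈ J, a ≠ 0 ∧ leftAnn {a * a} ≤ leftAnn {a} := by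
  obtain ⟨b, hb, hbn⟩ := exists_mem_not_isNilpotent hsp hacc hJ
  obtain ⟨n, hn, hle⟩ := hacc.exists_pow_leftAnn b
  exact ⟨b ^ n, J.pow_mem_of_mem hb n hn, fun h => hbn ⟨n, h⟩, hle⟩

theorem leftAnn_add_mul_self_le {c x : R} (hc : leftAnn {c * c} ≤ leftAnn {c})
    (hx : leftAnn {x * x} ≤ leftAnn {x}) (hxc : x * c = 0) :
    leftAnn {(c + x) * (c + x)} ≤ leftAnn {c} ⊓ leftAnn {x} := by
  intro r hr
  simp only [mem_leftAnn_singleton] at hr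
  have hxc' : ∀ y, y * x * c = 0 := fun y => by rw [mul_assoc, hxc, mul_zero]
  have hrcc : r * c * c = 0 := by
    refine mem_leftAnn_singleton.1 (hc (mem_leftAnn_singleton.2 ?_))
    calc r * c * (c * c) = r * ((c + x) * (c + x)) * c := by
          simp only [add_mul, mul_add, ← mul_assoc, hxc', add_zero]
      _ = 0 := by rw [hr, zero_mul]
  have hrc : r * c = 0 :=
    mem_leftAnn_singleton.1 (hc (mem_leftAnn_singleton.2 (by rw [← mul_assoc, hrcc])))
  have hrc' : ∀ y, r * c * y = 0 := fun y => by rw [hrc, zero_mul]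
  refine ⟨mem_leftAnn_singleton.2 hrc, mem_leftAnn_singleton.2 (mem_leftAnn_singleton.1 (hx ?_))⟩
  rw [mem_leftAnn_singleton, ← hr]
  simp only [add_mul, mul_add, ← mul_assoc, hrc', hxc', zero_add, add_zero]

theorem disjoint_span_leftAnn {x : R} (hx : leftAnn {x * x} ≤ leftAnn {x}) :
    Disjoint (span R {x}) (leftAnn {x}) := by
  refine disjoint_def.2 fun y hy hyx => ?_
  obtain ⟨r, rfl⟩ := mem_span_singleton.1 hy
  rw [smul_eq_mul, mem_leftAnn_singleton, mul_assoc] at hyx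
  simpa using hx (mem_leftAnn_singleton.2 hyx)

theorem iSupIndep_span_singleton_of_mul_eq_zero {x : ℕ → R}
    (hx : ∀ n, leftAnn {x n * x n} ≤ leftAnn {x n}) (horth : ∀ n m, n < m → x m * x n = 0) :
    iSupIndep fun n => span R {x n} :=
  iSupIndep_of_disjoint_iSup_gt fun n => (disjoint_span_leftAnn (hx n)).mono_right <|
    iSup₂_le fun m hm => (span_singleton_le_iff_mem _ _).2 (mem_leftAnn_singleton.2 (horth n m hm))

theorem exists_seq_mul_eq_zero {E : Ideal R}
    (step : ∀ c ∈ E, leftAnn {c * c} ≤ leftAnn {c} →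
      ∃ x ∈ E, x ≠ 0 ∧ leftAnn {x * x} ≤ leftAnn {x} ∧ x * c = 0) :
    ∃ x : ℕ → R, (∀ n, x n ≠ 0) ∧ (∀ n, leftAnn {x n * x n} ≤ leftAnn {x n}) ∧
      ∀ n m, n < m → x m * x n = 0 := by
  choose! y hyE hy0 hy hyc using step
  let S := {c // c ∈ E ∧ leftAnn {c * c} ≤ leftAnn {c}}
  -- Only the partial sum `s n` of the elements chosen so far is remembered: `ℓ(s n)` decreases
  -- and lies in the annihilator of every earlier element.
  have hnext (c : S) : leftAnn {(c.1 + y c.1) * (c.1 + y c.1)} ≤ leftAnn {c.1} ⊓ leftAnn {y c.1} :=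
    leftAnn_add_mul_self_le c.2.2 (hy _ c.2.1 c.2.2) (hyc _ c.2.1 c.2.2)
  let next : S → S := fun c => ⟨c.1 + y c.1, E.add_mem c.2.1 (hyE _ c.2.1 c.2.2),
    (hnext c).trans fun r hr => mem_leftAnn_singleton.2 <| by
      rw [mul_add, mem_leftAnn_singleton.1 hr.1, mem_leftAnn_singleton.1 hr.2, add_zero]⟩
  let s : ℕ → S := fun n => next^[n] ⟨0, E.zero_mem, by simp⟩
  have hs : ∀ n, s (n + 1) = next (s n) := fun n => Function.iterate_succ_apply' next n _
  have hanti : Antitone fun n => leftAnn {(s n).1} := antitone_nat_of_succ_le fun n => by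
    rw [hs]
    exact (leftAnn_le_leftAnn_mul _ _).trans ((hnext (s n)).trans inf_le_left)
  refine ⟨fun n => y (s n).1, fun n => hy0 _ (s n).2.1 (s n).2.2,
    fun n => hy _ (s n).2.1 (s n).2.2, fun n m hnm => ?_⟩
  have hm : y (s m).1 ∈ leftAnn {(s (n + 1)).1} :=
    hanti hnm (mem_leftAnn_singleton.2 (hyc _ (s m).2.1 (s m).2.2))
  rw [hs] at hm
  exact mem_leftAnn_singleton.1
    ((leftAnn_le_leftAnn_mul _ _).trans ((hnext (s n)).trans inf_le_right) hm)

theorem exists_isRightRegular_mem (hsp : IsSemiprimeRing R) (hG : IsLeftGoldie R) {E : Ideal R}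
    (hE : IsEssential E) : ∃ c ∈ E, IsRightRegular c := by
  by_contra! hreg
  obtain ⟨x, hx0, hx, horth⟩ := exists_seq_mul_eq_zero (E := E) fun c hcE _ => by
    have hc : leftAnn {c} ≠ ⊥ := fun h => hreg c hcE <|
      isRightRegular_iff_left_eq_zero_of_mul.2 fun z hz => by
        simpa [h] using (mem_leftAnn_singleton.2 hz : z ∈ leftAnn {c})
    obtain ⟨x, ⟨hxE, hxc⟩, hx0, hx⟩ :=
      exists_mem_leftAnn_mul_self_le hsp hG.1 fun h => hc (hE _ (disjoint_iff.2 h))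
    exact ⟨x, hxE, hx0, hx, mem_leftAnn_singleton.1 hxc⟩
  exact hG.2 ⟨_, fun n => by simpa using hx0 n, iSupIndep_span_singleton_of_mul_eq_zero hx horth⟩

theorem isEssential_span_singleton (hdim : HasFiniteUniformDimension R) {c : R}
    (hc : IsRightRegular c) : IsEssential (span R {c}) := by
  intro L hL
  by_contra hL0
  let f : ℕ → R →ₗ[R] R := fun n => LinearMap.toSpanSingleton R R (c ^ n)
  have hf : ∀ n, Function.Injective (f n) := fun n a b h => (hc.pow n) (by simpa [f] using h)
  refine hdim ⟨fun n => L.map (f n), fun n h => hL0 ((map_injective_of_injective (hf n)) ?_),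
    iSupIndep_of_disjoint_iSup_gt fun n => ?_⟩
  · exact h.trans (Submodule.map_bot _).symm
  refine (disjoint_map (hf n) hL.symm).mono_right (iSup₂_le fun m hm => ?_)
  rintro _ ⟨l, -, rfl⟩
  refine ⟨l * c ^ (m - n - 1) * c, mem_span_singleton.2 ⟨_, rfl⟩, ?_⟩
  simp only [f, LinearMap.toSpanSingleton_apply, smul_eq_mul, mul_assoc, ← pow_succ', ← pow_add]
  congr 2
  omega

theorem exists_isRegular_mem (hsp : IsSemiprimeRing R) (hG : IsLeftGoldie R) {E : Ideal R}
    (hE : IsEssential E) : ∃ c ∈ E, IsRegular c := by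
  obtain ⟨c, hcE, hc⟩ := exists_isRightRegular_mem hsp hG hE
  refine ⟨c, hcE, isLeftRegular_iff_right_eq_zero_of_mul.2 fun x hx => ?_, hc⟩
  refine eq_zero_of_isEssential_leftAnn hsp hG.1 ((isEssential_span_singleton hG.2 hc).mono ?_)
  rw [span_singleton_le_iff_mem, mem_leftAnn_singleton, hx]

theorem isLeftOre (hsp : IsSemiprimeRing R) (hG : IsLeftGoldie R) : IsLeftOre R := by
  intro r c hc
  obtain ⟨c', hc'mem, hc'⟩ := exists_isRegular_mem hsp hG
    ((isEssential_span_singleton hG.2 hc.right).comap (LinearMap.toSpanSingleton R R r))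
  obtain ⟨r', hr'⟩ := mem_span_singleton.1 hc'mem
  exact ⟨c', r', hc', by simpa using hr'.symm⟩

end Ring

structure IsClassicalLeftQuotient {R Q : Type*} [Ring R] [Ring Q] (φ : R →+* Q) : Prop where
  injective : Function.Injective φ
  isUnit : ∀ c : R, IsRegular c → IsUnit (φ c)
  exists_mul_eq : ∀ q : Q, ∃ c r : R, IsRegular c ∧ φ c * q = φ r

namespace IsClassicalLeftQuotient

variable {R Q : Type*} [Ring R] [Ring Q] {φ : R →+* Q}

theorem isLeftOre (hφ : IsClassicalLeftQuotient φ) : IsLeftOre R := by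
  intro r c hc
  obtain ⟨c', r', hc', h⟩ := hφ.exists_mul_eq (φ r * ↑(hφ.isUnit c hc).unit⁻¹)
  refine ⟨c', r', hc', hφ.injective ?_⟩
  rw [map_mul, map_mul, ← h, mul_assoc, mul_assoc, IsUnit.val_inv_mul, mul_one]

theorem mem_map_iff (hφ : IsClassicalLeftQuotient φ) {I : Ideal R} {q : Q} :
    q ∈ I.map φ ↔ ∃ c r : R, IsRegular c ∧ r ∈ I ∧ φ c * q = φ r := by
  refine ⟨fun hq => ?_, fun ⟨c, r, hc, hr, h⟩ => ?_⟩
  · induction hq using Submodule.span_induction with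
    | mem _ hx =>
      obtain ⟨r, hr, rfl⟩ := hx
      exact ⟨1, r, isRegular_one, hr, by rw [map_one, one_mul]⟩
    | zero => exact ⟨1, 0, isRegular_one, I.zero_mem, by simp⟩
    | add q₁ q₂ _ _ h₁ h₂ =>
      obtain ⟨c₁, r₁, hc₁, hr₁, e₁⟩ := h₁
      obtain ⟨c₂, r₂, hc₂, hr₂, e₂⟩ := h₂
      obtain ⟨c', r', hc', he⟩ := hφ.isLeftOre c₁ c₂ hc₂
      refine ⟨c' * c₁, c' * r₁ + r' * r₂, hc'.mul hc₁,
        I.add_mem (I.smul_mem c' hr₁) (I.smul_mem r' hr₂), ?_⟩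
      rw [mul_add, map_add]
      congr 1
      · rw [map_mul, mul_assoc, e₁, map_mul]
      · rw [he, map_mul, mul_assoc, e₂, map_mul]
    | smul a q _ h =>
      obtain ⟨c, r, hc, hr, e⟩ := h
      obtain ⟨d, s, hd, ed⟩ := hφ.exists_mul_eq a
      obtain ⟨c', r', hc', he⟩ := hφ.isLeftOre s c hc
      refine ⟨c' * d, r' * r, hc'.mul hd, I.smul_mem r' hr, ?_⟩
      rw [smul_eq_mul, map_mul, mul_assoc, ← mul_assoc (φ d), ed, ← mul_assoc, ← map_mul, he,
        map_mul, mul_assoc, e, ← map_mul]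
  · rw [((hφ.isUnit c hc).unit.eq_inv_mul_iff_mul_eq).2 h]
    exact Ideal.mul_mem_left _ _ (Ideal.mem_map_of_mem φ hr)

theorem comap_map_leftAnn (hφ : IsClassicalLeftQuotient φ) (X : Set R) :
    ((leftAnn X).map φ).comap φ = leftAnn X := by
  refine le_antisymm (fun x hx a ha => ?_) Ideal.le_comap_map
  obtain ⟨c, r, hc, hr, h⟩ := (hφ.mem_map_iff).1 (Ideal.mem_comap.1 hx)
  rw [← map_mul, hφ.injective.eq_iff] at h
  exact hc.left (by rw [← mul_assoc, h, hr a ha, mul_zero] : c * (x * a) = c * 0)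

theorem map_comap (hφ : IsClassicalLeftQuotient φ) (𝔄 : Ideal Q) : (𝔄.comap φ).map φ = 𝔄 := by
  refine le_antisymm Ideal.map_comap_le fun q hq => ?_
  obtain ⟨c, r, hc, h⟩ := hφ.exists_mul_eq q
  exact hφ.mem_map_iff.2 ⟨c, r, hc, Ideal.mem_comap.2 (h ▸ 𝔄.mul_mem_left _ hq), h⟩

theorem disjoint_map (hφ : IsClassicalLeftQuotient φ) {I J : Ideal R} (h : Disjoint I J) :
    Disjoint (I.map φ) (J.map φ) := by
  refine disjoint_def.2 fun q hqI hqJ => ?_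
  obtain ⟨c, r, hc, hr, e⟩ := hφ.mem_map_iff.1 hqI
  obtain ⟨d, s, hd, hs, f⟩ := hφ.mem_map_iff.1 hqJ
  obtain ⟨d', c', hd', he⟩ := hφ.isLeftOre d c hc
  -- over the common denominator `d' d = c' c` the numerators of `q` lie in `I ∩ J = 0`
  have hnum : d' * s = c' * r := hφ.injective <| by
    rw [map_mul, ← f, ← mul_assoc, ← map_mul, he, map_mul, mul_assoc, e, map_mul]
  have hzero : c' * r = 0 := disjoint_def.1 h _ (I.smul_mem c' hr) (hnum ▸ J.smul_mem d' hs)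
  have hq : φ (d' * d) * q = 0 := by rw [map_mul, mul_assoc, f, ← map_mul, hnum, hzero, map_zero]
  rwa [(hφ.isUnit _ (hd'.mul hd)).mul_right_eq_zero] at hq

theorem hasAccLeftAnn (hφ : IsClassicalLeftQuotient φ) [IsNoetherianRing Q] :
    HasAccLeftAnn R := by
  intro f hf hmono
  choose X hX using hf
  have hX' : ∀ n, f n = ((leftAnn (X n)).map φ).comap φ := fun n => by
    rw [hφ.comap_map_leftAnn]; exact hX n
  have hle : Monotone fun n => leftAnn (X n) := fun m n hmn => by
    have := hmono hmn
    rwa [hX, hX] at this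
  obtain ⟨n, hn⟩ := monotone_stabilizes_iff_noetherian.2 ‹IsNoetherianRing Q›
    ⟨fun n => (leftAnn (X n)).map φ, fun _ _ hmn => Ideal.map_mono (hle hmn)⟩
  exact ⟨n, fun m hm => by
    rw [hX', hX']
    exact congrArg (fun I => (Ideal.comap φ I : Set R)) (hn m hm).symm⟩

theorem hasFiniteUniformDimension (hφ : IsClassicalLeftQuotient φ) [IsNoetherianRing Q] :
    HasFiniteUniformDimension R := by
  rintro ⟨g, hg0, hg⟩
  have hind : iSupIndep fun n => (g n).map φ := fun n => by
    simpa only [Ideal.map_iSup] using hφ.disjoint_map (hg n)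
  have hfin := Submodule.finite_ne_bot_of_iSupIndep hind
  simp only [ne_eq, Ideal.map_eq_bot_iff_of_injective hφ.injective, hg0, not_false_eq_true,
    Set.ofPred_true] at hfin
  exact Set.infinite_univ hfin

theorem isSemisimpleRing (hφ : IsClassicalLeftQuotient φ) (hsp : IsSemiprimeRing R)
    (hG : IsLeftGoldie R) : IsSemisimpleRing Q := by
  refine (isSemisimpleModule_iff Q Q).2 ⟨fun 𝔄 => ?_⟩
  obtain ⟨I', hdisj, hess⟩ := exists_disjoint_isEssential_sup (Ideal.comap φ 𝔄)
  obtain ⟨c, hc, hreg⟩ := exists_isRegular_mem hsp hG hess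
  refine ⟨Ideal.map φ I', ?_, ?_⟩
  · simpa only [hφ.map_comap] using hφ.disjoint_map hdisj
  · rw [codisjoint_iff, ← hφ.map_comap 𝔄, ← Ideal.map_sup]
    exact Ideal.eq_top_of_isUnit_mem _ (Ideal.mem_map_of_mem φ hc) (hφ.isUnit c hreg)

end IsClassicalLeftQuotient

theorem exists_isClassicalLeftQuotient {R : Type u} [Ring R] (hore : IsLeftOre R) :
    ∃ (Q : Type u) (_ : Ring Q) (φ : R →+* Q), IsClassicalLeftQuotient φ := by
  obtain ⟨_⟩ : Nonempty (OreLocalization.OreSet (nonZeroDivisors R)) :=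
    OreLocalization.nonempty_oreSet_iff.2
      ⟨fun r₁ r₂ s h => ⟨1, by simpa using (isRegular_iff_mem_nonZeroDivisors.2 s.2).right h⟩,
        fun r s => by
          obtain ⟨c', r', hc', h⟩ := hore r s (isRegular_iff_mem_nonZeroDivisors.2 s.2)
          exact ⟨r', ⟨c', isRegular_iff_mem_nonZeroDivisors.1 hc'⟩, h⟩⟩
  refine ⟨OreLocalization (nonZeroDivisors R) R, inferInstance, OreLocalization.numeratorRingHom,
    ⟨OreLocalization.numeratorHom_inj inf_le_left, fun c hc =>
      OreLocalization.numerator_isUnit ⟨c, isRegular_iff_mem_nonZeroDivisors.1 hc⟩, fun q => ?_⟩⟩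
  induction q using OreLocalization.ind with
  | _ r s => exact ⟨s, r, isRegular_iff_mem_nonZeroDivisors.2 s.2, OreLocalization.mul_cancel⟩

theorem isLeftGoldie_of_forall_isNoetherianRing {R : Type u} [Ring R] (hore : IsLeftOre R)
    (hnoe : ∀ (Q : Type u) [Ring Q] (φ : R →+* Q), IsClassicalLeftQuotient φ → IsNoetherianRing Q) :
    IsLeftGoldie R := by
  obtain ⟨Q, _, φ, hφ⟩ := exists_isClassicalLeftQuotient hore
  have := hnoe Q φ hφ
  exact ⟨hφ.hasAccLeftAnn, hφ.hasFiniteUniformDimension⟩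

end Goldie

/-- Let `R` be a semiprime ring. Then the classical left quotient
ring `Q(R) = C⁻¹R` exists (i.e. the set `C` of regular elements is a left Ore set) and
is left Noetherian if and only if `R` is a semiprime left Goldie ring (ACC on left
annihilators and no infinite direct sum of nonzero left ideals); in which case `Q(R)`
is semisimple (Artinian). A localization of `R` at `C` is modelled by a ring `Q`
together with an injective ring homomorphism `φ : R → Q` sending regular elements to
units such that every element of `Q` is a left fraction `(φ c)⁻¹ (φ r)`. -/
theorem stmt18 {R : Type u} [Ring R]
    (hsp : ∀ a : R, (∀ x : R, a * x * a = 0) → a = 0) :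
    (((∀ (r c : R), IsRegular c → ∃ c' r' : R, IsRegular c' ∧ c' * r = r' * c) ∧
      ∀ (Q : Type u) [Ring Q] (φ : R →+* Q), Function.Injective φ →
        (∀ c : R, IsRegular c → IsUnit (φ c)) →
        (∀ q : Q, ∃ c r : R, IsRegular c ∧ φ c * q = φ r) →
        IsNoetherianRing Q) ↔
      ((∀ f : ℕ → Set R,
          (∀ n : ℕ, ∃ X : Set R, f n = {q : R | ∀ a ∈ X, q * a = 0}) →
          Monotone f → ∃ n : ℕ, ∀ m : ℕ, n ≤ m → f m = f n) ∧
        ¬ ∃ g : ℕ → Ideal R, (∀ n, g n ≠ ⊥) ∧ iSupIndep g)) ∧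
    (((∀ (r c : R), IsRegular c → ∃ c' r' : R, IsRegular c' ∧ c' * r = r' * c) ∧
      ∀ (Q : Type u) [Ring Q] (φ : R →+* Q), Function.Injective φ →
        (∀ c : R, IsRegular c → IsUnit (φ c)) →
        (∀ q : Q, ∃ c r : R, IsRegular c ∧ φ c * q = φ r) →
        IsNoetherianRing Q) →
      ∀ (Q : Type u) [Ring Q] (φ : R →+* Q), Function.Injective φ →
        (∀ c : R, IsRegular c → IsUnit (φ c)) →
        (∀ q : Q, ∃ c r : R, IsRegular c ∧ φ c * q = φ r) →
        IsSemisimpleRing Q) := by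
  open Goldie in
  refine ⟨⟨fun ⟨hore, hnoe⟩ => ?_, fun hG => ⟨isLeftOre hsp hG, fun Q _ φ h₁ h₂ h₃ => ?_⟩⟩,
    fun ⟨hore, hnoe⟩ Q _ φ h₁ h₂ h₃ => ?_⟩
  · exact isLeftGoldie_of_forall_isNoetherianRing hore fun Q _ φ hφ => hnoe Q φ hφ.1 hφ.2 hφ.3
  · have := IsClassicalLeftQuotient.isSemisimpleRing ⟨h₁, h₂, h₃⟩ hsp hG
    infer_instance
  · exact IsClassicalLeftQuotient.isSemisimpleRing ⟨h₁, h₂, h₃⟩ hsp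
      (isLeftGoldie_of_forall_isNoetherianRing hore fun Q _ φ hφ => hnoe Q φ hφ.1 hφ.2 hφ.3)
end
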